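/- arXiv:1407.6816 — 5 statements merged into one kernel-verified Lean document; each statement's English description precedes it below -/
import Mathlib

section
/- Let d ≥ 2, let {𝒫^(b)}_{b=1}^{d+1} be a set of d+1 mutually unbiased measurements on ℂ^d with efficiency parameter κ, and let ρ be a density operator on ℂ^d. Then the index of coincidence of the probability distributions generated by the MUMs on ρ satisfies C(κ,ρ) = [(dκ−1)(d·Tr(ρ²)−1) + d²−1] / (d(d−1)). -/
/-!
Let `v b n = P b n - I/d` be the traceless parts of the MUM elements and `c = (dκ - 1)/(d - 1)`.
The MUM trace relations say that, for the pairing `Tr (X Y)`, the `v b n` are orthogonal across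
measurements and within one measurement have Gram matrix `c (I - J/d)`. Since `∑ₙ v b n = 0`, the
frame operator `X ↦ ∑ Tr (v X) v` multiplies each `v b n` by `c`, and it kills `I`. Dropping one
outcome per measurement leaves `(d + 1)(d - 1)` linearly independent `v`'s, which together with `I`
span all `d²` matrices, so the frame operator is `c` times the projection onto traceless matrices.
Pairing with `ρ` gives `∑ (p - 1/d)² = c (Tr ρ² - 1/d)`, and `∑ₙ p b n = 1` turns this into the
index of coincidence.
-/

open Matrix Finset Real
open scoped ComplexOrder

section TracelessPart

variable {K n : Type*} [Field K] [Fintype n] [DecidableEq n]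

def tracelessPart : Matrix n n K →ₗ[K] Matrix n n K :=
  LinearMap.id - (Fintype.card n : K)⁻¹ • (traceLinearMap n K K).smulRight 1

theorem tracelessPart_apply (A : Matrix n n K) :
    tracelessPart A = A - ((Fintype.card n : K)⁻¹ * A.trace) • 1 := by
  simp [tracelessPart, smul_smul]

theorem trace_tracelessPart_mul (A X : Matrix n n K) :
    (tracelessPart A * X).trace = (A * X).trace - (Fintype.card n : K)⁻¹ * A.trace * X.trace := by
  simp [tracelessPart_apply, Matrix.sub_mul, mul_assoc]

theorem trace_tracelessPart (hn : (Fintype.card n : K) ≠ 0) (A : Matrix n n K) :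
    (tracelessPart A).trace = 0 := by
  simp [tracelessPart_apply, mul_comm _ A.trace, hn]

theorem tracelessPart_one (hn : (Fintype.card n : K) ≠ 0) :
    tracelessPart (1 : Matrix n n K) = 0 := by
  simp [tracelessPart_apply, hn]

theorem trace_tracelessPart_mul_tracelessPart (hn : (Fintype.card n : K) ≠ 0) (A B : Matrix n n K) :
    (tracelessPart A * tracelessPart B).trace =
      (A * B).trace - (Fintype.card n : K)⁻¹ * A.trace * B.trace := by
  rw [trace_tracelessPart_mul, trace_tracelessPart hn, mul_zero, sub_zero, trace_mul_comm,
    trace_tracelessPart_mul, trace_mul_comm]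
  ring

end TracelessPart

section Frame

variable {K n β ν : Type*} [Field K] [Fintype n] [DecidableEq n] [Fintype β] [Fintype ν]

def frameOperator (v : β → ν → Matrix n n K) : Matrix n n K →ₗ[K] Matrix n n K where
  toFun X := ∑ b, ∑ i, (v b i * X).trace • v b i
  map_add' X Y := by simp [Matrix.mul_add, add_smul, Finset.sum_add_distrib]
  map_smul' a X := by simp [Finset.smul_sum, smul_smul]

theorem frameOperator_apply (v : β → ν → Matrix n n K) (X : Matrix n n K) :
    frameOperator v X = ∑ b, ∑ i, (v b i * X).trace • v b i := rfl

theorem frameOperator_one {v : β → ν → Matrix n n K} (htr : ∀ b i, (v b i).trace = 0) :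
    frameOperator v 1 = 0 := by
  simp [frameOperator_apply, htr]

variable [DecidableEq β] [DecidableEq ν]

def HasCenteredBlockGram (v : β → ν → Matrix n n K) (c : K) : Prop :=
  ∀ b i b' i', (v b i * v b' i').trace =
    if b = b' then c * ((if i = i' then 1 else 0) - (Fintype.card ν : K)⁻¹) else 0

variable {v : β → ν → Matrix n n K} {c : K}

theorem frameOperator_apply_self (hsum : ∀ b, ∑ i, v b i = 0) (hgram : HasCenteredBlockGram v c)
    (b : β) (i : ν) : frameOperator v (v b i) = c • v b i := by
  simp [frameOperator_apply, hgram _ _ _ _, mul_sub, sub_smul, Finset.sum_sub_distrib,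
    ← Finset.smul_sum, hsum]

theorem HasCenteredBlockGram.coeff_eq_inv_card_mul_sum
    (hgram : HasCenteredBlockGram v c) (hc : c ≠ 0) {g : β → ν → K}
    (hg : ∑ b, ∑ i, g b i • v b i = 0) (b : β) (i : ν) :
    g b i = (Fintype.card ν : K)⁻¹ * ∑ j, g b j := by
  have h := congrArg (fun X => (X * v b i).trace) hg
  simp only [Finset.sum_mul, Matrix.smul_mul, trace_sum, trace_smul, smul_eq_mul,
    hgram _ _ _ _] at h
  simp only [mul_sub, mul_ite, mul_one, mul_zero, sum_ite_irrel, sum_sub_distrib, sum_ite_eq',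
    mem_univ, ↓reduceIte, ← sum_mul, sum_const_zero, zero_mul, trace_zero] at h
  exact mul_left_cancel₀ hc (by linear_combination h)

theorem HasCenteredBlockGram.linearIndependent_subtype_ne
    (hgram : HasCenteredBlockGram v c) (hc : c ≠ 0) (i₀ : ν) :
    LinearIndependent K (fun q : β × {i // i ≠ i₀} => v q.1 q.2) := by
  rw [Fintype.linearIndependent_iff]
  intro g hg
  -- Extended by `0` at `i₀`, the coefficients are still constant on each block, hence zero.
  set G : β → ν → K := fun b i => if h : i = i₀ then 0 else g (b, ⟨i, h⟩) with hG
  have hG0 : ∑ b, ∑ i, G b i • v b i = 0 := by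
    rw [← hg, Fintype.sum_prod_type]
    refine Finset.sum_congr rfl fun b _ => ?_
    rw [← Fintype.sum_subtype_add_sum_subtype (fun i => i ≠ i₀)]
    have h₁ (x : {i // i ≠ i₀}) : (x : ν) ≠ i₀ := x.2
    have h₂ (x : {i // ¬ i ≠ i₀}) : (x : ν) = i₀ := not_not.1 x.2
    simp [hG, h₁, h₂]
  rintro ⟨b, i, hi⟩
  have h₀ := hgram.coeff_eq_inv_card_mul_sum hc hG0 b i₀
  have h₁ := hgram.coeff_eq_inv_card_mul_sum hc hG0 b i
  simp only [hG, dif_pos rfl, dif_neg hi] at h₀ h₁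
  rw [h₁, ← h₀]

theorem HasCenteredBlockGram.span_option_one_eq_top (hgram : HasCenteredBlockGram v c)
    (htr : ∀ b i, (v b i).trace = 0) (hc : c ≠ 0) (hn : (Fintype.card n : K) ≠ 0)
    (hcard : Fintype.card β * (Fintype.card ν - 1) + 1 = Fintype.card n * Fintype.card n)
    (i₀ : ν) :
    Submodule.span K (Set.range fun o : Option (β × {i // i ≠ i₀}) =>
      Option.casesOn' o 1 fun q => v q.1 q.2) = ⊤ := by
  have h1 : (1 : Matrix n n K) ∉
      Submodule.span K (Set.range fun q : β × {i // i ≠ i₀} => v q.1 q.2) := by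
    intro h
    have hle : Submodule.span K (Set.range fun q : β × {i // i ≠ i₀} => v q.1 q.2) ≤
        LinearMap.ker (Matrix.traceLinearMap n K K) := by
      rw [Submodule.span_le]
      rintro _ ⟨q, rfl⟩
      exact htr _ _
    simpa [hn] using hle h
  refine ((hgram.linearIndependent_subtype_ne hc i₀).option h1).span_eq_top_of_card_eq_finrank ?_
  simp [Module.finrank_matrix, Fintype.card_subtype_compl, hcard]

theorem frameOperator_eq_smul_tracelessPart [Nonempty ν] (hsum : ∀ b, ∑ i, v b i = 0)
    (htr : ∀ b i, (v b i).trace = 0) (hgram : HasCenteredBlockGram v c) (hc : c ≠ 0)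
    (hn : (Fintype.card n : K) ≠ 0)
    (hcard : Fintype.card β * (Fintype.card ν - 1) + 1 = Fintype.card n * Fintype.card n) :
    frameOperator v = c • tracelessPart := by
  obtain ⟨i₀⟩ := ‹Nonempty ν›
  refine LinearMap.ext_on_range (hgram.span_option_one_eq_top htr hc hn hcard i₀) ?_
  rintro (_ | ⟨b, i, _⟩)
  · simp [frameOperator_one htr, tracelessPart_one hn]
  · simp [frameOperator_apply_self hsum hgram, tracelessPart_apply, htr]

theorem sum_trace_mul_sq [Nonempty ν] (hsum : ∀ b, ∑ i, v b i = 0)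
    (htr : ∀ b i, (v b i).trace = 0) (hgram : HasCenteredBlockGram v c) (hc : c ≠ 0)
    (hn : (Fintype.card n : K) ≠ 0)
    (hcard : Fintype.card β * (Fintype.card ν - 1) + 1 = Fintype.card n * Fintype.card n)
    (X : Matrix n n K) :
    ∑ b, ∑ i, (v b i * X).trace ^ 2 =
      c * ((X * X).trace - (Fintype.card n : K)⁻¹ * X.trace ^ 2) := by
  have h := congrArg (fun Y => (Y * X).trace)
    (LinearMap.congr_fun (frameOperator_eq_smul_tracelessPart hsum htr hgram hc hn hcard) X)
  simp only [frameOperator_apply, Finset.sum_mul, Matrix.smul_mul, trace_sum, trace_smul,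
    smul_eq_mul, LinearMap.smul_apply] at h
  simp only [sq, h, trace_tracelessPart_mul]
  ring

end Frame

theorem sum_sq_eq_sum_sub_inv_sq_add_inv {ι : Type*} [Fintype ι] {f : ι → ℝ}
    (hf : ∑ i, f i = 1) :
    ∑ i, f i ^ 2 = ∑ i, (f i - (Fintype.card ι : ℝ)⁻¹) ^ 2 + (Fintype.card ι : ℝ)⁻¹ := by
  have hι : (Fintype.card ι : ℝ) ≠ 0 := by
    intro h
    simp_all [Fintype.card_eq_zero_iff.1 (by exact_mod_cast h)]
  simp only [sub_sq', Finset.sum_sub_distrib, Finset.sum_add_distrib, ← Finset.sum_mul,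
    ← Finset.mul_sum, hf, Finset.sum_const, Finset.card_univ, nsmul_eq_mul]
  field_simp
  ring

theorem hasCenteredBlockGram_tracelessPart {β : Type*} [DecidableEq β] {d : ℕ} (hd : 2 ≤ d)
    {κ : ℝ} {P : β → Fin d → Matrix (Fin d) (Fin d) ℂ}
    (htr1 : ∀ b n, (P b n).trace = 1)
    (htr2 : ∀ b b', b ≠ b' → ∀ n n', (P b n * P b' n').trace = ((1 / (d : ℝ) : ℝ) : ℂ))
    (htr3 : ∀ b n n', (P b n * P b n').trace =
      if n = n' then ((κ : ℝ) : ℂ) else (((1 - κ) / ((d : ℝ) - 1) : ℝ) : ℂ)) :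
    HasCenteredBlockGram (fun b n => tracelessPart (P b n))
      ((((d : ℝ) * κ - 1) / ((d : ℝ) - 1) : ℝ) : ℂ) := by
  have hd0 : (d : ℂ) ≠ 0 := by norm_cast; omega
  have hd1 : (d : ℂ) - 1 ≠ 0 := by
    rw [sub_ne_zero]; norm_cast; omega
  intro b n b' n'
  rw [trace_tracelessPart_mul_tracelessPart (by simpa using hd0), htr1, htr1]
  simp only [Fintype.card_fin]
  split_ifs with hb hn
  · subst hb hn
    rw [htr3, if_pos rfl]
    push_cast
    field_simp
  · subst hb
    rw [htr3, if_neg hn]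
    push_cast
    field_simp
    ring
  · rw [htr2 b b' hb]
    push_cast
    ring

theorem sum_trace_tracelessPart_mul_sq_of_mum {d : ℕ} (hd : 2 ≤ d) {κ : ℝ}
    (hκ : (d : ℝ) * κ ≠ 1) {P : Fin (d + 1) → Fin d → Matrix (Fin d) (Fin d) ℂ}
    (hsum : ∀ b, ∑ n, P b n = 1)
    (htr1 : ∀ b n, (P b n).trace = 1)
    (htr2 : ∀ b b', b ≠ b' → ∀ n n', (P b n * P b' n').trace = ((1 / (d : ℝ) : ℝ) : ℂ))
    (htr3 : ∀ b n n', (P b n * P b n').trace =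
      if n = n' then ((κ : ℝ) : ℂ) else (((1 - κ) / ((d : ℝ) - 1) : ℝ) : ℂ))
    (X : Matrix (Fin d) (Fin d) ℂ) :
    ∑ b, ∑ n, (tracelessPart (P b n) * X).trace ^ 2 =
      ((((d : ℝ) * κ - 1) / ((d : ℝ) - 1) : ℝ) : ℂ) *
        ((X * X).trace - (d : ℂ)⁻¹ * X.trace ^ 2) := by
  have hn : (Fintype.card (Fin d) : ℂ) ≠ 0 := by simp; omega
  have hc : ((d : ℝ) * κ - 1) / ((d : ℝ) - 1) ≠ 0 := by
    have : (d : ℝ) - 1 ≠ 0 := by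
      rw [sub_ne_zero]; norm_cast; omega
    exact div_ne_zero (sub_ne_zero.2 hκ) this
  have hcard : Fintype.card (Fin (d + 1)) * (Fintype.card (Fin d) - 1) + 1 =
      Fintype.card (Fin d) * Fintype.card (Fin d) := by
    obtain ⟨k, rfl⟩ : ∃ k, d = k + 1 := ⟨d - 1, by omega⟩
    simp only [Fintype.card_fin, Nat.add_sub_cancel]
    ring
  have : Nonempty (Fin d) := ⟨⟨0, by omega⟩⟩
  simpa using sum_trace_mul_sq (fun b => by rw [← map_sum, hsum, tracelessPart_one hn])
    (fun b n => trace_tracelessPart hn (P b n))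
    (hasCenteredBlockGram_tracelessPart hd htr1 htr2 htr3) (by exact_mod_cast hc) hn hcard X

theorem stmt0_general (d : ℕ) (hd : 2 ≤ d) (κ : ℝ)
    (hκ1 : 1 / (d : ℝ) < κ)
    (P : Fin (d + 1) → Fin d → Matrix (Fin d) (Fin d) ℂ)
    (hsum : ∀ b, ∑ n, P b n = 1)
    (htr1 : ∀ b n, (P b n).trace = 1)
    (htr2 : ∀ b b', b ≠ b' → ∀ n n', (P b n * P b' n').trace = ((1 / (d : ℝ) : ℝ) : ℂ))
    (htr3 : ∀ b n n', (P b n * P b n').trace =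
      if n = n' then ((κ : ℝ) : ℂ) else (((1 - κ) / ((d : ℝ) - 1) : ℝ) : ℂ))
    (ρ : Matrix (Fin d) (Fin d) ℂ) (hρtr : ρ.trace = 1)
    (p : Fin (d + 1) → Fin d → ℝ)
    (hp : ∀ b n, ((p b n : ℝ) : ℂ) = (P b n * ρ).trace) :
    ∑ b, ∑ n, (p b n) ^ 2 =
      (((d : ℝ) * κ - 1) * ((d : ℝ) * ((ρ * ρ).trace.re) - 1) + (d : ℝ) ^ 2 - 1) /
        ((d : ℝ) * ((d : ℝ) - 1)) := by
  have hd' : (2 : ℝ) ≤ d := by exact_mod_cast hd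
  have hκ : (d : ℝ) * κ ≠ 1 := by
    rw [div_lt_iff₀ (by positivity)] at hκ1
    linarith
  have hprob : ∀ b, ∑ n, p b n = 1 := fun b => by
    exact_mod_cast show ((∑ n, p b n : ℝ) : ℂ) = 1 by
      rw [Complex.ofReal_sum]
      simp only [hp, ← trace_sum, ← Finset.sum_mul, hsum, Matrix.one_mul, hρtr]
  have hvρ : ∀ b n, (tracelessPart (P b n) * ρ).trace = ((p b n - (d : ℝ)⁻¹ : ℝ) : ℂ) := by
    intro b n
    rw [trace_tracelessPart_mul, htr1, hρtr, ← hp]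
    simp
  have hcentered : ∑ b, ∑ n, (p b n - (d : ℝ)⁻¹) ^ 2 =
      ((d : ℝ) * κ - 1) / ((d : ℝ) - 1) * ((ρ * ρ).trace.re - (d : ℝ)⁻¹) := by
    have key := sum_trace_tracelessPart_mul_sq_of_mum hd hκ hsum htr1 htr2 htr3 ρ
    simp only [hvρ, hρtr, ← Complex.ofReal_pow, ← Complex.ofReal_sum] at key
    have := congrArg Complex.re key
    rw [Complex.ofReal_re, Complex.re_ofReal_mul] at this
    simpa using this
  calc ∑ b, ∑ n, p b n ^ 2 = ∑ b, ∑ n, (p b n - (d : ℝ)⁻¹) ^ 2 + (d + 1) * (d : ℝ)⁻¹ := by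
        simp [sum_sq_eq_sum_sub_inv_sq_add_inv (hprob _), Finset.sum_add_distrib]
    _ = _ := by
        rw [hcentered]
        field_simp [show (d : ℝ) - 1 ≠ 0 by linarith]
        ring

theorem stmt0 (d : ℕ) (hd : 2 ≤ d) (κ : ℝ)
    (hκ1 : 1 / (d : ℝ) < κ) (hκ2 : κ ≤ 1)
    (P : Fin (d + 1) → Fin d → Matrix (Fin d) (Fin d) ℂ)
    (hpsd : ∀ b n, (P b n).PosSemidef)
    (hsum : ∀ b, ∑ n, P b n = 1)
    (htr1 : ∀ b n, (P b n).trace = 1)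
    (htr2 : ∀ b b', b ≠ b' → ∀ n n', (P b n * P b' n').trace = ((1 / (d : ℝ) : ℝ) : ℂ))
    (htr3 : ∀ b n n', (P b n * P b n').trace =
      if n = n' then ((κ : ℝ) : ℂ) else (((1 - κ) / ((d : ℝ) - 1) : ℝ) : ℂ))
    (ρ : Matrix (Fin d) (Fin d) ℂ) (hρ : ρ.PosSemidef) (hρtr : ρ.trace = 1)
    (p : Fin (d + 1) → Fin d → ℝ)
    (hp : ∀ b n, ((p b n : ℝ) : ℂ) = (P b n * ρ).trace) :
    ∑ b, ∑ n, (p b n) ^ 2 =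
      (((d : ℝ) * κ - 1) * ((d : ℝ) * ((ρ * ρ).trace.re) - 1) + (d : ℝ) ^ 2 - 1) /
        ((d : ℝ) * ((d : ℝ) - 1)) :=
  stmt0_general d hd κ hκ1 P hsum htr1 htr2 htr3 ρ hρtr p hp
end

section
/- Let d ≥ 2, let {𝒫^(b)}_{b=1}^{d+1} be a set of d+1 mutually unbiased measurements on ℂ^d with efficiency parameter κ, and let ρ be a density operator on ℂ^d. Then (1/(d+1)) Σ_{b=1}^{d+1} H(𝒫^(b)|ρ) ≥ log₂((d+1)/(κ+1)). -/
open Matrix Finset Real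
open scoped ComplexOrder

/-! With `q b n = p b n - 1/d`, the operator `T = ∑ q b n • P b n` satisfies
`Tr (T * P b n) = a * q b n` with `a = κ - (1 - κ)/(d - 1)`, by the trace relations of the
measurements and `∑ n, q b n = 0`. Hence `Tr (T * T) = a * ‖q‖²` and `Tr (T * σ) = ‖q‖²` for
`σ = ρ - 1/d`, and expanding `0 ≤ Tr ((T - a σ)²)` together with the purity bound
`Tr (ρ * ρ) ≤ 1` gives `‖q‖² ≤ κ - 1/d`, i.e. the collision probability bound
`∑ b, ∑ n, p b n ^ 2 ≤ κ + 1`. The Gibbs inequality `log x ≤ x - 1`, applied termwise at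
`x = p b n / c` with `c = (κ + 1)/(d + 1)`, turns it into the entropy bound. -/

namespace Matrix

variable {m : Type*} [Fintype m]

lemma PosSemidef.trace_mul_nonneg [DecidableEq m] {A B : Matrix m m ℂ} (hA : A.PosSemidef)
    (hB : B.PosSemidef) : 0 ≤ (A * B).trace := by
  obtain ⟨C, rfl⟩ : ∃ C : Matrix m m ℂ, B = Cᴴ * C := by
    open scoped MatrixOrder in exact CStarAlgebra.nonneg_iff_eq_star_mul_self.mp hB.nonneg
  rw [← Matrix.mul_assoc, trace_mul_comm]
  simpa only [Matrix.mul_assoc] using (hA.mul_mul_conjTranspose_same C).trace_nonneg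

lemma IsHermitian.trace_mul_self [DecidableEq m] {A : Matrix m m ℂ} (hA : A.IsHermitian) :
    (A * A).trace = ((∑ i, hA.eigenvalues i ^ 2 : ℝ) : ℂ) := by
  conv_lhs => rw [hA.spectral_theorem, ← map_mul, Unitary.conjStarAlgAut_apply, trace_mul_cycle,
    Unitary.coe_star_mul_self, one_mul, diagonal_mul_diagonal, trace_diagonal]
  simp [sq]

lemma PosSemidef.trace_mul_self_le_sq [DecidableEq m] {A : Matrix m m ℂ} (hA : A.PosSemidef) :
    (A * A).trace ≤ A.trace ^ 2 := by
  rw [hA.isHermitian.trace_mul_self, hA.isHermitian.trace_eq_sum_eigenvalues,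
    ← RCLike.ofReal_sum, ← RCLike.ofReal_pow]
  exact Complex.real_le_real.mpr <|
    sum_sq_le_sq_sum_of_nonneg fun i _ ↦ hA.eigenvalues_nonneg i

lemma PosSemidef.trace_sub_inv_card_smul_one_mul_self_le [DecidableEq m] {ρ : Matrix m m ℂ}
    (hρ : ρ.PosSemidef) (hρtr : ρ.trace = 1) :
    ((ρ - ((1 / Fintype.card m : ℝ) : ℂ) • 1) * (ρ - ((1 / Fintype.card m : ℝ) : ℂ) • 1)).trace ≤
      ((1 - 1 / Fintype.card m : ℝ) : ℂ) := by
  have hcard : (Fintype.card m : ℂ) ≠ 0 := by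
    intro h
    simp [trace, Fintype.card_eq_zero_iff.mp (by exact_mod_cast h)] at hρtr
  calc _ = (ρ * ρ).trace - 1 / (Fintype.card m : ℂ) := by
        simp only [sub_mul, mul_sub, smul_mul, Matrix.mul_smul, Matrix.one_mul, Matrix.mul_one,
          smul_smul, trace_sub, trace_smul, trace_one, hρtr, smul_eq_mul]
        push_cast
        field_simp
        ring
    _ ≤ ((1 - 1 / Fintype.card m : ℝ) : ℂ) := by
        push_cast
        gcongr
        simpa [hρtr] using hρ.trace_mul_self_le_sq

lemma IsHermitian.le_mul_of_trace_mul_self_eq {T S : Matrix m m ℂ} (hT : T.IsHermitian)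
    (hS : S.IsHermitian) {a Q s : ℝ} (ha : 0 < a) (hTS : (T * S).trace = Q)
    (hTT : (T * T).trace = (a * Q : ℝ)) (hSS : (S * S).trace ≤ s) : Q ≤ a * s := by
  set X := T - (a : ℂ) • S
  have hX : Xᴴ = X := by
    simp [X, conjTranspose_sub, conjTranspose_smul, hT.eq, hS.eq]
  have hST : (S * T).trace = Q := by rw [trace_mul_comm, hTS]
  have hXX : (X * X).trace = (a : ℂ) ^ 2 * (S * S).trace - (a * Q : ℝ) := by
    simp only [X, sub_mul, mul_sub, smul_mul, Matrix.mul_smul, smul_smul, trace_sub, trace_smul,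
      hTS, hST, hTT, smul_eq_mul]
    push_cast
    ring
  have h0 : (0 : ℂ) ≤ ((a * (a * s - Q) : ℝ) : ℂ) := calc
    (0 : ℂ) ≤ (X * X).trace := by
      simpa only [hX] using (posSemidef_conjTranspose_mul_self X).trace_nonneg
    _ ≤ (a : ℂ) ^ 2 * s - (a * Q : ℝ) := by
      rw [hXX]
      gcongr
    _ = ((a * (a * s - Q) : ℝ) : ℂ) := by push_cast; ring
  nlinarith [Complex.zero_le_real.mp h0]

end Matrix

section BlockGram

variable {ι ν m : Type*} [Fintype ι] [Fintype ν] [Fintype m] [DecidableEq ι] [DecidableEq ν]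

lemma sum_sum_mul_ite_of_sum_eq_zero {q : ι → ν → ℝ} (hq : ∀ b, ∑ n, q b n = 0)
    (α β γ : ℝ) (b' : ι) (n' : ν) :
    ∑ b, ∑ n, q b n * (if b = b' then if n = n' then α else β else γ) = (α - β) * q b' n' := by
  rw [sum_eq_single b' (fun b _ hb ↦ by simp [hb, ← sum_mul, hq]) (by simp)]
  have hsplit : ∀ n, q b' n * (if n = n' then α else β) =
      (α - β) * (if n = n' then q b' n else 0) + β * q b' n := by
    intro n; split_ifs <;> ring
  simp [hsplit, sum_add_distrib, ← mul_sum, hq]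

variable {P : ι → ν → Matrix m m ℂ} {α β γ : ℝ} {q : ι → ν → ℝ}

lemma trace_sum_smul_mul_of_sum_eq_zero
    (hoff : ∀ b b', b ≠ b' → ∀ n n', (P b n * P b' n').trace = (γ : ℂ))
    (hdiag : ∀ b n n', (P b n * P b n').trace = if n = n' then (α : ℂ) else (β : ℂ))
    (hq : ∀ b, ∑ n, q b n = 0) (b' : ι) (n' : ν) :
    ((∑ b, ∑ n, (q b n : ℂ) • P b n) * P b' n').trace = ((α - β) * q b' n' : ℝ) := by
  have hP : ∀ b n, (P b n * P b' n').trace =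
      ((if b = b' then if n = n' then α else β else γ : ℝ) : ℂ) := by
    intro b n
    by_cases hb : b = b'
    · subst hb; rw [hdiag, if_pos rfl]; split_ifs <;> rfl
    · simp [hb, hoff b b' hb]
  simp only [sum_mul, trace_sum, smul_mul, trace_smul, hP, smul_eq_mul]
  rw [← sum_sum_mul_ite_of_sum_eq_zero hq α β γ b' n']
  push_cast
  rfl

lemma trace_sum_smul_mul_self_of_sum_eq_zero
    (hoff : ∀ b b', b ≠ b' → ∀ n n', (P b n * P b' n').trace = (γ : ℂ))
    (hdiag : ∀ b n n', (P b n * P b n').trace = if n = n' then (α : ℂ) else (β : ℂ))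
    (hq : ∀ b, ∑ n, q b n = 0) :
    ((∑ b, ∑ n, (q b n : ℂ) • P b n) * (∑ b, ∑ n, (q b n : ℂ) • P b n)).trace =
      ((α - β) * ∑ b, ∑ n, q b n ^ 2 : ℝ) := by
  simp only [mul_sum, Matrix.mul_smul, trace_sum, trace_smul,
    trace_sum_smul_mul_of_sum_eq_zero hoff hdiag hq, smul_eq_mul]
  push_cast
  exact sum_congr rfl fun b _ ↦ sum_congr rfl fun n _ ↦ by ring

end BlockGram

lemma sum_trace_mul_eq_one {ν m : Type*} [Fintype ν] [Fintype m] [DecidableEq m]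
    {P : ν → Matrix m m ℂ} (hsum : ∑ n, P n = 1) {ρ : Matrix m m ℂ} (hρtr : ρ.trace = 1)
    {p : ν → ℝ} (hp : ∀ n, (p n : ℂ) = (P n * ρ).trace) : ∑ n, p n = 1 := by
  have : ((∑ n, p n : ℝ) : ℂ) = 1 := by
    simp only [Complex.ofReal_sum, hp, ← trace_sum, ← sum_mul, hsum, Matrix.one_mul, hρtr]
  exact_mod_cast this

lemma sum_sq_eq_sum_sq_sub_inv_add {ν : Type*} [Fintype ν] {p : ν → ℝ} (hp : ∑ n, p n = 1) :
    ∑ n, p n ^ 2 = ∑ n, (p n - 1 / Fintype.card ν) ^ 2 + 1 / Fintype.card ν := by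
  have hcard : (Fintype.card ν : ℝ) ≠ 0 := by
    intro h
    simp [Fintype.card_eq_zero_iff.mp (by exact_mod_cast h)] at hp
  have hexpand : ∀ n, (p n - 1 / Fintype.card ν) ^ 2 =
      p n ^ 2 - 2 / Fintype.card ν * p n + 1 / (Fintype.card ν : ℝ) ^ 2 := by
    intro n; ring
  simp only [hexpand, sum_add_distrib, sum_sub_distrib, ← mul_sum, hp, sum_const, card_univ,
    nsmul_eq_mul]
  field_simp
  ring

theorem sum_sum_sq_sub_inv_le_of_mutuallyUnbiased {ι : Type*} [Fintype ι] [DecidableEq ι]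
    (d : ℕ) (hd : 2 ≤ d) (κ : ℝ) (hκ1 : 1 / (d : ℝ) < κ)
    (P : ι → Fin d → Matrix (Fin d) (Fin d) ℂ)
    (hpsd : ∀ b n, (P b n).PosSemidef)
    (hsum : ∀ b, ∑ n, P b n = 1)
    (htr1 : ∀ b n, (P b n).trace = 1)
    (htr2 : ∀ b b', b ≠ b' → ∀ n n', (P b n * P b' n').trace = ((1 / (d : ℝ) : ℝ) : ℂ))
    (htr3 : ∀ b n n', (P b n * P b n').trace =
      if n = n' then ((κ : ℝ) : ℂ) else (((1 - κ) / ((d : ℝ) - 1) : ℝ) : ℂ))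
    (ρ : Matrix (Fin d) (Fin d) ℂ) (hρ : ρ.PosSemidef) (hρtr : ρ.trace = 1)
    (p : ι → Fin d → ℝ) (hp : ∀ b n, ((p b n : ℝ) : ℂ) = (P b n * ρ).trace) :
    ∑ b, ∑ n, (p b n - 1 / d) ^ 2 ≤ κ - 1 / d := by
  have hdR : (2 : ℝ) ≤ d := by exact_mod_cast hd
  set δ : ℝ := 1 / d
  set a : ℝ := κ - (1 - κ) / ((d : ℝ) - 1)
  set q : ι → Fin d → ℝ := fun b n ↦ p b n - δ
  set T : Matrix (Fin d) (Fin d) ℂ := ∑ b, ∑ n, (q b n : ℂ) • P b n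
  set σ : Matrix (Fin d) (Fin d) ℂ := ρ - (δ : ℂ) • 1
  have hq : ∀ b, ∑ n, q b n = 0 := fun b ↦ by
    simp only [q, δ, sum_sub_distrib, sum_trace_mul_eq_one (hsum b) hρtr (hp b), sum_const,
      card_univ, Fintype.card_fin, nsmul_eq_mul]
    field_simp
    ring
  have hT : T.IsHermitian := by
    simp [IsHermitian, T, conjTranspose_sum, conjTranspose_smul, (hpsd _ _).isHermitian.eq]
  have hσ : σ.IsHermitian := by
    simp [IsHermitian, σ, conjTranspose_sub, conjTranspose_smul, hρ.isHermitian.eq]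
  have hTσ : (T * σ).trace = (∑ b, ∑ n, q b n ^ 2 : ℝ) := by
    simp only [σ, T, mul_sub, Matrix.mul_smul, trace_sub, trace_smul, trace_sum,
      sum_mul, smul_mul, htr1, ← hp, smul_eq_mul, mul_one]
    push_cast
    simp only [← sum_sub_distrib]
    exact sum_congr rfl fun b _ ↦ sum_congr rfl fun n _ ↦ by simp only [q]; push_cast; ring
  have hd1 : (d : ℝ) - 1 ≠ 0 := by linarith
  have ha : 0 < a := by
    have hκd : 1 < κ * d := by rwa [div_lt_iff₀ (by positivity)] at hκ1
    have : a = (κ * d - 1) / (d - 1) := by simp only [a]; field_simp; ring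
    rw [this]
    exact div_pos (by linarith) (by linarith)
  calc ∑ b, ∑ n, q b n ^ 2
      ≤ a * (1 - δ) := hT.le_mul_of_trace_mul_self_eq hσ ha hTσ
        (trace_sum_smul_mul_self_of_sum_eq_zero htr2 htr3 hq)
        (by simpa only [Fintype.card_fin] using hρ.trace_sub_inv_card_smul_one_mul_self_le hρtr)
    _ = κ - δ := by simp only [a, δ]; field_simp; ring

theorem sum_sum_sq_le_of_mutuallyUnbiased (d : ℕ) (hd : 2 ≤ d) (κ : ℝ)
    (hκ1 : 1 / (d : ℝ) < κ)
    (P : Fin (d + 1) → Fin d → Matrix (Fin d) (Fin d) ℂ)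
    (hpsd : ∀ b n, (P b n).PosSemidef)
    (hsum : ∀ b, ∑ n, P b n = 1)
    (htr1 : ∀ b n, (P b n).trace = 1)
    (htr2 : ∀ b b', b ≠ b' → ∀ n n', (P b n * P b' n').trace = ((1 / (d : ℝ) : ℝ) : ℂ))
    (htr3 : ∀ b n n', (P b n * P b n').trace =
      if n = n' then ((κ : ℝ) : ℂ) else (((1 - κ) / ((d : ℝ) - 1) : ℝ) : ℂ))
    (ρ : Matrix (Fin d) (Fin d) ℂ) (hρ : ρ.PosSemidef) (hρtr : ρ.trace = 1)
    (p : Fin (d + 1) → Fin d → ℝ) (hp : ∀ b n, ((p b n : ℝ) : ℂ) = (P b n * ρ).trace) :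
    ∑ b, ∑ n, p b n ^ 2 ≤ κ + 1 := by
  have hcore := sum_sum_sq_sub_inv_le_of_mutuallyUnbiased d hd κ hκ1 P hpsd hsum htr1 htr2 htr3
    ρ hρ hρtr p hp
  simp only [sum_sq_eq_sum_sq_sub_inv_add (sum_trace_mul_eq_one (hsum _) hρtr (hp _)),
    Fintype.card_fin, sum_add_distrib, sum_const, card_univ, nsmul_eq_mul]
  have hd0 : (d : ℝ) ≠ 0 := by positivity
  rw [Nat.cast_add_one, mul_one_div, add_div, div_self hd0]
  linarith

lemma Real.mul_log_le_mul_log_add {w c : ℝ} (hw : 0 ≤ w) (hc : 0 < c) :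
    w * log w ≤ w * log c + w * (w / c - 1) := by
  rcases hw.eq_or_lt with rfl | hw
  · simp
  have h := log_le_sub_one_of_pos (div_pos hw hc)
  rw [log_div hw.ne' hc.ne'] at h
  nlinarith [mul_le_mul_of_nonneg_left h hw.le]

lemma sum_sum_mul_log_le_of_sum_sum_sq_le {ι ν : Type*} [Fintype ι] [Fintype ν]
    {p : ι → ν → ℝ} (hp0 : ∀ b n, 0 ≤ p b n) (hp1 : ∀ b, ∑ n, p b n = 1) {c : ℝ} (hc : 0 < c)
    (hS : ∑ b, ∑ n, p b n ^ 2 ≤ Fintype.card ι * c) :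
    ∑ b, ∑ n, p b n * log (p b n) ≤ Fintype.card ι * log c := by
  have hrow : ∀ b, ∑ n, (p b n * log c + p b n * (p b n / c - 1)) =
      log c + (∑ n, p b n ^ 2) / c - 1 := fun b ↦ by
    simp only [mul_sub, mul_one, sum_add_distrib, sum_sub_distrib, ← sum_mul, hp1, sum_div,
      mul_div_assoc', sq]
    ring
  have hSc : (∑ b, ∑ n, p b n ^ 2) / c ≤ Fintype.card ι := (div_le_iff₀ hc).2 hS
  calc ∑ b, ∑ n, p b n * log (p b n)
      ≤ ∑ b, ∑ n, (p b n * log c + p b n * (p b n / c - 1)) :=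
        sum_le_sum fun b _ ↦ sum_le_sum fun n _ ↦ mul_log_le_mul_log_add (hp0 b n) hc
    _ = Fintype.card ι * log c + ((∑ b, ∑ n, p b n ^ 2) / c - Fintype.card ι) := by
        simp only [hrow, sum_sub_distrib, sum_add_distrib, sum_const, card_univ, nsmul_eq_mul,
          ← sum_div]
        ring
    _ ≤ Fintype.card ι * log c := by linarith

theorem stmt2_general (d : ℕ) (hd : 2 ≤ d) (κ : ℝ)
    (hκ1 : 1 / (d : ℝ) < κ)
    (P : Fin (d + 1) → Fin d → Matrix (Fin d) (Fin d) ℂ)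
    (hpsd : ∀ b n, (P b n).PosSemidef)
    (hsum : ∀ b, ∑ n, P b n = 1)
    (htr1 : ∀ b n, (P b n).trace = 1)
    (htr2 : ∀ b b', b ≠ b' → ∀ n n', (P b n * P b' n').trace = ((1 / (d : ℝ) : ℝ) : ℂ))
    (htr3 : ∀ b n n', (P b n * P b n').trace =
      if n = n' then ((κ : ℝ) : ℂ) else (((1 - κ) / ((d : ℝ) - 1) : ℝ) : ℂ))
    (ρ : Matrix (Fin d) (Fin d) ℂ) (hρ : ρ.PosSemidef) (hρtr : ρ.trace = 1)
    (p : Fin (d + 1) → Fin d → ℝ)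
    (hp : ∀ b n, ((p b n : ℝ) : ℂ) = (P b n * ρ).trace) :
    (1 / ((d : ℝ) + 1)) * (∑ b, (-∑ n, p b n * Real.logb 2 (p b n))) ≥
      Real.logb 2 (((d : ℝ) + 1) / (κ + 1)) := by
  have hκ0 : 0 < κ := lt_trans (by positivity) hκ1
  have hp0 : ∀ b n, 0 ≤ p b n := fun b n ↦
    Complex.zero_le_real.mp ((hp b n).symm ▸ (hpsd b n).trace_mul_nonneg hρ)
  have hp1 : ∀ b, ∑ n, p b n = 1 := fun b ↦ sum_trace_mul_eq_one (hsum b) hρtr (hp b)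
  have hS : ∑ b, ∑ n, p b n ^ 2 ≤ Fintype.card (Fin (d + 1)) * ((κ + 1) / ((d : ℝ) + 1)) := by
    rw [Fintype.card_fin, Nat.cast_add_one, mul_div_cancel₀ _ (by positivity)]
    exact sum_sum_sq_le_of_mutuallyUnbiased d hd κ hκ1 P hpsd hsum htr1 htr2 htr3 ρ hρ hρtr p hp
  have hH := sum_sum_mul_log_le_of_sum_sum_sq_le hp0 hp1 (by positivity) hS
  rw [Fintype.card_fin, Nat.cast_add_one] at hH
  calc logb 2 (((d : ℝ) + 1) / (κ + 1))
      = -log ((κ + 1) / ((d : ℝ) + 1)) / log 2 := by rw [logb, ← log_inv, inv_div]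
    _ ≤ -(∑ b, ∑ n, p b n * log (p b n)) / ((d : ℝ) + 1) / log 2 := by
      gcongr
      rw [le_div_iff₀ (by positivity)]
      linarith
    _ = (1 / ((d : ℝ) + 1)) * (∑ b, (-∑ n, p b n * logb 2 (p b n))) := by
      simp only [logb, mul_div_assoc', ← sum_div, sum_neg_distrib]
      ring

theorem stmt2 (d : ℕ) (hd : 2 ≤ d) (κ : ℝ)
    (hκ1 : 1 / (d : ℝ) < κ) (hκ2 : κ ≤ 1)
    (P : Fin (d + 1) → Fin d → Matrix (Fin d) (Fin d) ℂ)
    (hpsd : ∀ b n, (P b n).PosSemidef)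
    (hsum : ∀ b, ∑ n, P b n = 1)
    (htr1 : ∀ b n, (P b n).trace = 1)
    (htr2 : ∀ b b', b ≠ b' → ∀ n n', (P b n * P b' n').trace = ((1 / (d : ℝ) : ℝ) : ℂ))
    (htr3 : ∀ b n n', (P b n * P b n').trace =
      if n = n' then ((κ : ℝ) : ℂ) else (((1 - κ) / ((d : ℝ) - 1) : ℝ) : ℂ))
    (ρ : Matrix (Fin d) (Fin d) ℂ) (hρ : ρ.PosSemidef) (hρtr : ρ.trace = 1)
    (p : Fin (d + 1) → Fin d → ℝ)
    (hp : ∀ b n, ((p b n : ℝ) : ℂ) = (P b n * ρ).trace) :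
    (1 / ((d : ℝ) + 1)) * (∑ b, (-∑ n, p b n * Real.logb 2 (p b n))) ≥
      Real.logb 2 (((d : ℝ) + 1) / (κ + 1)) :=
  stmt2_general d hd κ hκ1 P hpsd hsum htr1 htr2 htr3 ρ hρ hρtr p hp
end

section
/- Let d ≥ 2, let {𝒫^(b)}_{b=1}^{d+1} be a set of d+1 mutually unbiased measurements on ℂ^d with efficiency parameter κ, and let ρ be a density operator on ℂ^d. Then for every integer x with 1 ≤ x ≤ d−1, Σ_{b=1}^{d+1} H(𝒫^(b)|ρ) ≥ (d+1)[(x+1)log₂(x+1) − x log₂ x] − C(κ,ρ)·x(x+1)[log₂(x+1) − log₂ x], where C(κ,ρ) = Σ_{b=1}^{d+1} Σ_{n=1}^{d} (p_n^(b))². -/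
/-!
Let `A - B t` be the chord of `-log` between `t = 1/(x+1)` and `t = 1/x`, and
`g t = -log t - (A - B t)`. For the outcome distribution `q` of each basis, `∑ qᵢ g(qᵢ) ≥ 0`
(the Harremoës–Topsøe bound of the entropy by the index of coincidence); summing over the
`d + 1` bases gives the theorem.

The function `t ↦ t g(t)` is subadditive on `[0, 1/(2B)]` and convex on `[1/(2B), ∞)`. Merging
two small atoms and averaging the large ones (Jensen) reduces the bound to
`q = (b, …, b, a)` with `k` copies of `b` and `a ≤ b`. Along this family, parametrised by
`b ∈ [1/(k+1), 1/k]`, the derivative of `∑ qᵢ g(qᵢ)` is concave and vanishes at `b = 1/(k+1)`,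
so the minimum is attained at an end, a uniform distribution on `j = k + 1` or `j = k` points.
There the sum is `g(1/j) ≥ 0`, because the convex function `g` vanishes at `1/x` and `1/(x+1)`.
-/

section

open Set Real

lemma Multiset.exists_eq_cons_cons_of_two_le_card {α : Type*} {s : Multiset α}
    (hs : 2 ≤ Multiset.card s) : ∃ a b t, s = a ::ₘ b ::ₘ t := by
  obtain ⟨a, ha⟩ := Multiset.card_pos_iff_exists_mem.mp (by omega : 0 < Multiset.card s)
  obtain ⟨t', rfl⟩ := Multiset.exists_cons_of_mem ha
  rw [Multiset.card_cons] at hs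
  obtain ⟨b, hb⟩ := Multiset.card_pos_iff_exists_mem.mp (by omega : 0 < Multiset.card t')
  obtain ⟨t, rfl⟩ := Multiset.exists_cons_of_mem hb
  exact ⟨a, b, t, rfl⟩

section Reduction

variable {f : ℝ → ℝ} {c : ℝ}

lemma ConvexOn.exists_card_mul_le_sum_map (hf : ConvexOn ℝ (Ici c) f) {L : Multiset ℝ}
    (hL : ∀ t ∈ L, c ≤ t) :
    ∃ b, c ≤ b ∧ L.sum = Multiset.card L * b ∧ Multiset.card L * f b ≤ (L.map f).sum := by
  rcases eq_or_ne L 0 with rfl | hL0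
  · exact ⟨c, by simp⟩
  have hk : (0 : ℝ) < Multiset.card L := by exact_mod_cast Multiset.card_pos.mpr hL0
  have hsum : ∀ g : ℝ → ℝ, (L.map g).sum = ∑ x : L, g x.1 := fun g => by
    conv_lhs => rw [← Multiset.map_univ_coe L, Multiset.map_map]
    rfl
  have hjensen := hf.map_sum_le (t := Finset.univ) (w := fun _ => (Multiset.card L : ℝ)⁻¹)
    (p := fun x : L => x.1) (fun _ _ => by positivity) (by simp [hk.ne'])
    (fun x _ => hL x.1 Multiset.coe_mem)
  simp only [smul_eq_mul, ← Finset.mul_sum] at hjensen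
  have hL1 : L.sum = ∑ x : L, x.1 := by simpa using hsum id
  refine ⟨L.sum / Multiset.card L, ?_, by field_simp, ?_⟩
  · rw [le_div_iff₀ hk, mul_comm, ← nsmul_eq_mul]
    exact Multiset.card_nsmul_le_sum hL
  · rwa [hsum f, hL1, div_eq_inv_mul, ← le_inv_mul_iff₀ hk]

theorem Multiset.sum_map_nonneg_of_merge_of_convexOn (hf0 : f 0 = 0) (hc : 0 ≤ c)
    (hmerge : ∀ a b, 0 ≤ a → a ≤ c → 0 ≤ b → b ≤ c → f (a + b) ≤ f a + f b)
    (hconv : ConvexOn ℝ (Set.Ici c) f)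
    (hextremal : ∀ (k : ℕ) (a b : ℝ), 0 ≤ a → a ≤ c → c ≤ b → k * b + a = 1 →
      0 ≤ k * f b + f a)
    (s : Multiset ℝ) (hs0 : ∀ t ∈ s, 0 ≤ t) (hs1 : s.sum = 1) : 0 ≤ (s.map f).sum := by
  induction hn : Multiset.card s using Nat.strong_induction_on generalizing s with
  | _ n ih =>
  set S := s.filter (· ≤ c)
  set L := s.filter (fun t => ¬ t ≤ c)
  have hSL : S + L = s := Multiset.filter_add_not _ s
  have hS : ∀ t ∈ S, 0 ≤ t ∧ t ≤ c := fun t ht =>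
    ⟨hs0 t (Multiset.mem_of_mem_filter ht), (Multiset.mem_filter.mp ht).2⟩
  by_cases hS2 : 2 ≤ Multiset.card S
  · obtain ⟨a, b, t, hab⟩ := Multiset.exists_eq_cons_cons_of_two_le_card hS2
    have hs : s = a ::ₘ b ::ₘ (t + L) := by rw [← hSL, hab]; simp
    obtain ⟨ha0, hac⟩ := hS a (by simp [hab])
    obtain ⟨hb0, hbc⟩ := hS b (by simp [hab])
    have hmerged := ih _ (by rw [← hn, hs]; simp) ((a + b) ::ₘ (t + L))
      (fun u hu => (Multiset.mem_cons.mp hu).elim (· ▸ by positivity)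
        fun hu => hs0 u (by rw [hs]; simp [hu]))
      (by rw [← hs1, hs]; simp [add_assoc]) rfl
    rw [hs]
    simp only [Multiset.map_cons, Multiset.sum_cons] at hmerged ⊢
    linarith [hmerge a b ha0 hac hb0 hbc]
  · obtain ⟨a, hSa, hfa, ha0, hac⟩ : ∃ a, S.sum = a ∧ (S.map f).sum = f a ∧ 0 ≤ a ∧ a ≤ c := by
      rcases Nat.le_one_iff_eq_zero_or_eq_one.mp (by omega : Multiset.card S ≤ 1) with h | h
      · exact ⟨0, by simp [Multiset.card_eq_zero.mp h, hf0, hc]⟩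
      · obtain ⟨a, ha⟩ := Multiset.card_eq_one.mp h
        exact ⟨a, by simpa [ha] using hS a (by simp [ha])⟩
    obtain ⟨b, hcb, hLb, hfb⟩ := hconv.exists_card_mul_le_sum_map (L := L)
      fun t ht => le_of_not_ge (Multiset.mem_filter.mp ht).2
    have := hextremal _ a b ha0 hac hcb
      (by rw [← hLb, ← hSa, add_comm, ← Multiset.sum_add, hSL, hs1])
    rw [← hSL, Multiset.map_add, Multiset.sum_add]
    linarith

end Reduction

lemma nonneg_of_hasDerivAt_of_concaveOn {F G : ℝ → ℝ} {α β : ℝ}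
    (hF : ContinuousOn F (Icc α β)) (hFG : ∀ t ∈ Ioo α β, HasDerivAt F (G t) t)
    (hG : ConcaveOn ℝ (Ico α β) G) (hGα : G α = 0) (hFα : 0 ≤ F α) (hFβ : 0 ≤ F β) :
    ∀ t ∈ Icc α β, 0 ≤ F t := by
  intro t ht
  by_contra! hneg
  have hαt : α < t := ht.1.lt_of_ne (by rintro rfl; linarith)
  have htβ : t < β := ht.2.lt_of_ne (by rintro rfl; linarith)
  obtain ⟨ξ, hξ, hGξ⟩ := exists_hasDerivAt_eq_slope F G hαt
    (hF.mono (Icc_subset_Icc_right ht.2)) fun s hs => hFG s ⟨hs.1, hs.2.trans htβ⟩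
  obtain ⟨η, hη, hGη⟩ := exists_hasDerivAt_eq_slope F G htβ
    (hF.mono (Icc_subset_Icc_left ht.1)) fun s hs => hFG s ⟨hαt.trans hs.1, hs.2⟩
  have hGξ_neg : G ξ < 0 := by
    rw [hGξ]; exact div_neg_of_neg_of_pos (by linarith) (by linarith)
  have hGη_nonneg : 0 ≤ G η := by
    rw [hGη]; exact div_nonneg (by linarith) (by linarith)
  have hmin := hG.ge_on_segment (x := α) (y := η) (z := ξ) ⟨le_rfl, hαt.trans htβ⟩
    ⟨by linarith [hη.1], hη.2⟩
    (by rw [segment_eq_Icc (by linarith [hη.1])]; exact ⟨hξ.1.le, (hξ.2.trans hη.1).le⟩)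
  rw [hGα, min_eq_left hGη_nonneg] at hmin
  linarith

lemma concaveOn_log_one_sub_mul_sub_log {k : ℝ} (hk : 1 ≤ k) :
    ConcaveOn ℝ (Ico (k + 1)⁻¹ k⁻¹) fun t => log (1 - k * t) - log t := by
  have hk0 : 0 < k := by linarith
  have hpos : ∀ t ∈ Ico (k + 1)⁻¹ k⁻¹, 0 < t ∧ 0 < 1 - k * t := fun t ht =>
    ⟨lt_of_lt_of_le (by positivity) ht.1,
      sub_pos.mpr ((lt_inv_mul_iff₀ hk0).mp (by rw [mul_one]; exact ht.2))⟩
  have hderiv : ∀ t ∈ Ico (k + 1)⁻¹ k⁻¹,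
      HasDerivAt (fun t => log (1 - k * t) - log t) (-(t * (1 - k * t))⁻¹) t := fun t ht => by
    obtain ⟨ht0, hkt⟩ := hpos t ht
    exact ((((hasDerivAt_id' t).const_mul k).const_sub 1).log hkt.ne').sub
      (hasDerivAt_log ht0.ne') |>.congr_deriv (by field_simp; ring)
  refine AntitoneOn.concaveOn_of_deriv (convex_Ico _ _)
    (fun t ht => (hderiv t ht).continuousAt.continuousWithinAt)
    (fun t ht => (hderiv t (interior_subset ht)).differentiableAt.differentiableWithinAt) ?_
  intro s hs t ht hst
  rw [interior_Ico] at hs ht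
  rw [(hderiv s (Ioo_subset_Ico_self hs)).deriv, (hderiv t (Ioo_subset_Ico_self ht)).deriv]
  obtain ⟨ht0, hkt⟩ := hpos t (Ioo_subset_Ico_self ht)
  have hs0 : 0 < s := (hpos s (Ioo_subset_Ico_self hs)).1
  have hs1 : 1 < s * (k + 1) := (inv_lt_iff_one_lt_mul₀ (by positivity)).mp hs.1
  have hks : 1 ≤ k * (s + t) := by nlinarith
  rw [neg_le_neg_iff]
  exact inv_anti₀ (by positivity) (by nlinarith [mul_nonneg (sub_nonneg.2 hst) (sub_nonneg.2 hks)])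

/-- `chordIntercept x - chordSlope x * t` is the chord of `-log` through `t = 1/(x+1)` and
`t = 1/x`. -/
noncomputable def chordIntercept (x : ℕ) : ℝ := (x + 1) * log (x + 1) - x * log x

noncomputable def chordSlope (x : ℕ) : ℝ := x * (x + 1) * (log (x + 1) - log x)

noncomputable def chordGap (x : ℕ) (t : ℝ) : ℝ := -log t - chordIntercept x + chordSlope x * t

section Chord

variable {x : ℕ}

lemma chordSlope_pos (hx : 1 ≤ x) : 0 < chordSlope x := by
  have hx0 : (0 : ℝ) < x := by exact_mod_cast hx
  have : 0 < log (x + 1) - log x := sub_pos.mpr (log_lt_log hx0 (lt_add_one _))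
  unfold chordSlope
  positivity

lemma chordGap_inv_natCast (hx : 1 ≤ x) : chordGap x (x : ℝ)⁻¹ = 0 := by
  have hx0 : (x : ℝ) ≠ 0 := by positivity
  simp only [chordGap, chordIntercept, chordSlope, log_inv]
  field_simp
  ring

lemma chordGap_inv_natCast_add_one : chordGap x ((x : ℝ) + 1)⁻¹ = 0 := by
  simp only [chordGap, chordIntercept, chordSlope, log_inv]
  field_simp
  ring

lemma convexOn_chordGap : ConvexOn ℝ (Ioi 0) (chordGap x) := by
  have h := ((strictConcaveOn_log_Ioi.concaveOn.neg).add
    ((LinearMap.mul ℝ ℝ (chordSlope x)).convexOn (convex_Ioi 0))).add_const (-chordIntercept x)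
  refine h.congr fun t _ => ?_
  simp only [chordGap, Pi.add_apply, Pi.neg_apply, LinearMap.mul_apply']
  ring

lemma chordGap_inv_natCast_nonneg (hx : 1 ≤ x) {j : ℕ} (hj : 1 ≤ j) :
    0 ≤ chordGap x (j : ℝ)⁻¹ := by
  have hx0 : (0 : ℝ) < x := by exact_mod_cast hx
  have hj0 : (0 : ℝ) < j := by exact_mod_cast hj
  have hlt : ((x : ℝ) + 1)⁻¹ < (x : ℝ)⁻¹ := inv_strictAnti₀ hx0 (lt_add_one _)
  have hmem : ∀ {u : ℝ}, 0 < u → u⁻¹ ∈ Ioi (0 : ℝ) := fun hu => inv_pos.mpr hu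
  have hzero : chordGap x (x : ℝ)⁻¹ = chordGap x ((x : ℝ) + 1)⁻¹ := by
    rw [chordGap_inv_natCast hx, chordGap_inv_natCast_add_one]
  rcases le_or_gt j x with hjx | hxj
  · have := convexOn_chordGap.le_right_of_left_le'' (hmem (by positivity)) (hmem hj0) hlt
      (inv_anti₀ hj0 (by exact_mod_cast hjx)) hzero.ge
    rwa [chordGap_inv_natCast hx] at this
  · have := convexOn_chordGap.le_left_of_right_le'' (hmem hj0) (hmem hx0)
      (inv_anti₀ (by positivity) (by exact_mod_cast hxj)) hlt hzero.le
    rwa [chordGap_inv_natCast_add_one] at this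

lemma continuous_mul_chordGap : Continuous fun t => t * chordGap x t := by
  refine ((continuous_mul_log.neg.sub (continuous_const_mul (chordIntercept x))).add
    ((continuous_pow 2).const_mul (chordSlope x))).congr fun t => ?_
  simp only [chordGap, Pi.add_apply, Pi.sub_apply, Pi.neg_apply]
  ring

lemma hasDerivAt_mul_chordGap {t : ℝ} (ht : t ≠ 0) :
    HasDerivAt (fun t => t * chordGap x t) (chordGap x t - 1 + chordSlope x * t) t := by
  have hg : HasDerivAt (chordGap x) (-t⁻¹ + chordSlope x) t :=
    (((hasDerivAt_log ht).neg.sub_const _).add ((hasDerivAt_id t).const_mul _)).congr_deriv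
      (by simp)
  exact ((hasDerivAt_id' t).mul hg).congr_deriv (by field_simp; ring)

lemma mul_chordGap_add_le {a b : ℝ} (ha : 0 ≤ a) (hb : 0 ≤ b)
    (hab : chordSlope x * (a + b) ≤ 1) :
    (a + b) * chordGap x (a + b) ≤ a * chordGap x a + b * chordGap x b := by
  rcases ha.eq_or_lt with rfl | ha
  · simp
  rcases hb.eq_or_lt with rfl | hb
  · simp
  have hlog : ∀ {u v : ℝ}, 0 < u → 0 < v → v / (u + v) ≤ log (u + v) - log u :=
    fun {u v} hu hv => by
      have := one_sub_inv_le_log_of_pos (x := (u + v) / u) (by positivity)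
      rw [log_div (by positivity) hu.ne', inv_div] at this
      field_simp at this ⊢
      linarith
  have h1 := hlog ha hb
  have h2 := hlog hb ha
  rw [add_comm b a] at h2
  have key : 2 * a * b * chordSlope x ≤ a * (log (a + b) - log a) + b * (log (a + b) - log b) :=
    calc 2 * a * b * chordSlope x ≤ 2 * a * b / (a + b) := by
          rw [le_div_iff₀ (by positivity)]; nlinarith [mul_pos ha hb]
      _ = a * (b / (a + b)) + b * (a / (a + b)) := by ring
      _ ≤ _ := by gcongr
  simp only [chordGap]
  nlinarith

lemma convexOn_mul_chordGap (hx : 1 ≤ x) :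
    ConvexOn ℝ (Ici (2 * chordSlope x)⁻¹) fun t => t * chordGap x t := by
  have hB := chordSlope_pos hx
  have hpos : ∀ t ∈ Ici (2 * chordSlope x)⁻¹, 0 < t := fun t ht =>
    lt_of_lt_of_le (by positivity) ht
  have hderiv : ∀ t ∈ Ici (2 * chordSlope x)⁻¹,
      HasDerivAt (fun t => t * chordGap x t) (chordGap x t - 1 + chordSlope x * t) t :=
    fun t ht => hasDerivAt_mul_chordGap (hpos t ht).ne'
  refine MonotoneOn.convexOn_of_deriv (convex_Ici _)
    (fun t ht => (hderiv t ht).continuousAt.continuousWithinAt)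
    (fun t ht => (hderiv t (interior_subset ht)).differentiableAt.differentiableWithinAt) ?_
  intro s hs t ht hst
  rw [interior_Ici] at hs ht
  rw [(hderiv s (Ioi_subset_Ici_self hs)).deriv, (hderiv t (Ioi_subset_Ici_self ht)).deriv]
  have hs0 := hpos s (Ioi_subset_Ici_self hs)
  have ht0 := hpos t (Ioi_subset_Ici_self ht)
  have hlog : log t - log s ≤ (t - s) / s := by
    have := log_le_sub_one_of_pos (div_pos ht0 hs0)
    rw [log_div ht0.ne' hs0.ne'] at this
    rwa [sub_div, div_self hs0.ne']
  have hinv : s⁻¹ ≤ 2 * chordSlope x := by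
    simpa using inv_anti₀ (by positivity) (le_of_lt (mem_Ioi.mp hs))
  have : (t - s) / s ≤ 2 * chordSlope x * (t - s) := by
    rw [div_eq_mul_inv, mul_comm]; exact mul_le_mul_of_nonneg_right hinv (by linarith)
  simp only [chordGap]
  linarith

lemma hasDerivAt_mul_chordGap_add_mul_chordGap_one_sub {k t : ℝ} (ht : 0 < t)
    (hkt : 0 < 1 - k * t) :
    HasDerivAt (fun t => k * (t * chordGap x t) + (1 - k * t) * chordGap x (1 - k * t))
      (k * (log (1 - k * t) - log t + 2 * chordSlope x * ((k + 1) * t - 1))) t := by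
  have := ((hasDerivAt_mul_chordGap (x := x) ht.ne').const_mul k).add
    ((hasDerivAt_mul_chordGap (x := x) hkt.ne').comp t
      (((hasDerivAt_id' t).const_mul k).const_sub 1))
  exact this.congr_deriv (by simp only [chordGap]; ring)

lemma mul_chordGap_extremal_nonneg (hx : 1 ≤ x) {k : ℕ} {a b : ℝ} (ha : 0 ≤ a) (hab : a ≤ b)
    (hsum : k * b + a = 1) : 0 ≤ k * (b * chordGap x b) + a * chordGap x a := by
  rcases Nat.eq_zero_or_pos k with rfl | hk
  · obtain rfl : a = 1 := by simpa using hsum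
    simpa using chordGap_inv_natCast_nonneg hx le_rfl
  have hk0 : (0 : ℝ) < k := by exact_mod_cast hk
  have hk1 : (1 : ℝ) ≤ k := by exact_mod_cast hk
  set B := chordSlope x
  set F : ℝ → ℝ := fun t => k * (t * chordGap x t) + (1 - k * t) * chordGap x (1 - k * t)
  set G : ℝ → ℝ := fun t => k * (log (1 - k * t) - log t + 2 * B * ((k + 1) * t - 1))
  have hFcont : ContinuousOn F (Icc ((k : ℝ) + 1)⁻¹ (k : ℝ)⁻¹) :=
    ((continuous_const.mul continuous_mul_chordGap).add
      (continuous_mul_chordGap.comp (by fun_prop))).continuousOn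
  have hFG : ∀ t ∈ Ioo ((k : ℝ) + 1)⁻¹ (k : ℝ)⁻¹, HasDerivAt F (G t) t := fun t ht =>
    hasDerivAt_mul_chordGap_add_mul_chordGap_one_sub (lt_trans (by positivity) ht.1)
      (sub_pos.mpr ((lt_inv_mul_iff₀ hk0).mp (by rw [mul_one]; exact ht.2)))
  have hGconc : ConcaveOn ℝ (Ico ((k : ℝ) + 1)⁻¹ (k : ℝ)⁻¹) G := by
    have h := (((concaveOn_log_one_sub_mul_sub_log hk1).add
      ((LinearMap.mul ℝ ℝ (2 * B * (k + 1))).concaveOn (convex_Ico _ _))).add_const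
      (-(2 * B))).smul hk0.le
    exact h.congr fun t _ => by simp only [G, Pi.add_apply, LinearMap.mul_apply', smul_eq_mul]; ring
  have hα : 1 - k * ((k : ℝ) + 1)⁻¹ = ((k : ℝ) + 1)⁻¹ := by field_simp; ring
  have hGα : G ((k : ℝ) + 1)⁻¹ = 0 := by
    simp only [G, hα]
    field_simp
    ring
  have hFα : 0 ≤ F ((k : ℝ) + 1)⁻¹ := by
    have := chordGap_inv_natCast_nonneg hx (j := k + 1) (by omega)
    push_cast at this
    simp only [F, hα]
    convert this using 1
    field_simp
  have hFβ : 0 ≤ F (k : ℝ)⁻¹ := by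
    simpa only [F, mul_inv_cancel₀ hk0.ne', sub_self, zero_mul, add_zero,
      mul_inv_cancel_left₀ hk0.ne'] using chordGap_inv_natCast_nonneg hx hk
  have hb : b ∈ Icc ((k : ℝ) + 1)⁻¹ (k : ℝ)⁻¹ := by
    constructor
    · rw [inv_le_iff_one_le_mul₀ (by positivity)]; linarith
    · rw [← one_div, le_div_iff₀ hk0]; linarith
  obtain rfl : a = 1 - k * b := by linarith
  exact nonneg_of_hasDerivAt_of_concaveOn hFcont hFG hGconc hGα hFα hFβ b hb

theorem chordIntercept_sub_chordSlope_mul_sum_sq_le_sum_negMulLog (hx : 1 ≤ x)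
    {ι : Type*} [Fintype ι] (q : ι → ℝ) (hq0 : ∀ i, 0 ≤ q i) (hq1 : ∑ i, q i = 1) :
    chordIntercept x - chordSlope x * ∑ i, q i ^ 2 ≤ ∑ i, negMulLog (q i) := by
  have hB := chordSlope_pos hx
  have hsmall : ∀ a b : ℝ, a ≤ (2 * chordSlope x)⁻¹ → b ≤ (2 * chordSlope x)⁻¹ →
      chordSlope x * (a + b) ≤ 1 := fun a b ha hb =>
    calc chordSlope x * (a + b)
        ≤ chordSlope x * ((2 * chordSlope x)⁻¹ + (2 * chordSlope x)⁻¹) := by gcongr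
      _ = 1 := by field_simp; ring
  have h := Multiset.sum_map_nonneg_of_merge_of_convexOn (f := fun t => t * chordGap x t)
    (by simp) (by positivity)
    (fun a b ha hac hb hbc => mul_chordGap_add_le ha hb (hsmall a b hac hbc))
    (convexOn_mul_chordGap hx)
    (fun k a b ha hac hcb hsum => mul_chordGap_extremal_nonneg hx ha (hac.trans hcb) hsum)
    (Finset.univ.val.map q) (by simpa using hq0) (by simpa using hq1)
  have hsummand : ∀ i, q i * chordGap x (q i) =
      negMulLog (q i) - chordIntercept x * q i + chordSlope x * q i ^ 2 := fun i => by
    simp only [chordGap, negMulLog]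
    ring
  simp only [Multiset.map_map, Function.comp_def] at h
  change 0 ≤ ∑ i, q i * chordGap x (q i) at h
  simp only [hsummand, Finset.sum_add_distrib, Finset.sum_sub_distrib, ← Finset.mul_sum, hq1] at h
  linarith

end Chord

end

open Matrix Finset Real
open scoped ComplexOrder

open scoped MatrixOrder in
lemma Matrix.PosSemidef.trace_mul_nonneg_s4 {𝕜 n : Type*} [RCLike 𝕜] [Fintype n]
    {A B : Matrix n n 𝕜} (hA : A.PosSemidef) (hB : B.PosSemidef) : 0 ≤ (A * B).trace := by
  classical
  obtain ⟨C, hC⟩ : ∃ C : Matrix n n 𝕜, B = Cᴴ * C :=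
    ⟨CFC.sqrt B, by rw [← star_eq_conjTranspose, (CFC.sqrt_nonneg B).isSelfAdjoint.star_eq,
      CFC.sqrt_mul_sqrt_self B hB.nonneg]⟩
  rw [hC, ← Matrix.mul_assoc, Matrix.trace_mul_comm, ← Matrix.mul_assoc]
  exact (hA.mul_mul_conjTranspose_same C).trace_nonneg

theorem stmt4_general (d : ℕ)
    (P : Fin (d + 1) → Fin d → Matrix (Fin d) (Fin d) ℂ)
    (hpsd : ∀ b n, (P b n).PosSemidef)
    (hsum : ∀ b, ∑ n, P b n = 1)
    (ρ : Matrix (Fin d) (Fin d) ℂ) (hρ : ρ.PosSemidef) (hρtr : ρ.trace = 1)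
    (p : Fin (d + 1) → Fin d → ℝ)
    (hp : ∀ b n, ((p b n : ℝ) : ℂ) = (P b n * ρ).trace) :
    ∀ x : ℕ, 1 ≤ x → x ≤ d - 1 →
      ∑ b, (-∑ n, p b n * Real.logb 2 (p b n)) ≥
        ((d : ℝ) + 1) * (((x : ℝ) + 1) * Real.logb 2 ((x : ℝ) + 1) - (x : ℝ) * Real.logb 2 (x : ℝ)) -
          (∑ b, ∑ n, (p b n) ^ 2) * (x : ℝ) * ((x : ℝ) + 1) *
            (Real.logb 2 ((x : ℝ) + 1) - Real.logb 2 (x : ℝ)) := by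
  intro x hx _
  have hp0 : ∀ b n, 0 ≤ p b n := fun b n => by
    rw [← Complex.zero_le_real, hp]
    exact (hpsd b n).trace_mul_nonneg_s4 hρ
  have hp1 : ∀ b, ∑ n, p b n = 1 := fun b => by
    have : ((∑ n, p b n : ℝ) : ℂ) = 1 := by
      push_cast
      simp_rw [hp, ← Matrix.trace_sum, ← Finset.sum_mul, hsum, Matrix.one_mul, hρtr]
    exact_mod_cast this
  have key := Finset.sum_le_sum fun b (_ : b ∈ Finset.univ) =>
    chordIntercept_sub_chordSlope_mul_sum_sq_le_sum_negMulLog hx (p b) (hp0 b) (hp1 b)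
  simp only [Finset.sum_sub_distrib, Finset.sum_const, Finset.card_univ, Fintype.card_fin,
    nsmul_eq_mul, ← Finset.mul_sum] at key
  have hentropy :
      ∑ b, -∑ n, p b n * logb 2 (p b n) = (∑ b, ∑ n, negMulLog (p b n)) / log 2 := by
    simp only [logb, negMulLog, Finset.sum_div, ← Finset.sum_neg_distrib]
    exact Finset.sum_congr rfl fun b _ => Finset.sum_congr rfl fun n _ => by ring
  rw [hentropy, ge_iff_le, le_div_iff₀ (log_pos one_lt_two)]
  convert key using 1
  simp only [logb, chordIntercept, chordSlope]
  push_cast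
  field_simp

theorem stmt4 (d : ℕ) (hd : 2 ≤ d) (κ : ℝ)
    (hκ1 : 1 / (d : ℝ) < κ) (hκ2 : κ ≤ 1)
    (P : Fin (d + 1) → Fin d → Matrix (Fin d) (Fin d) ℂ)
    (hpsd : ∀ b n, (P b n).PosSemidef)
    (hsum : ∀ b, ∑ n, P b n = 1)
    (htr1 : ∀ b n, (P b n).trace = 1)
    (htr2 : ∀ b b', b ≠ b' → ∀ n n', (P b n * P b' n').trace = ((1 / (d : ℝ) : ℝ) : ℂ))
    (htr3 : ∀ b n n', (P b n * P b n').trace =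
      if n = n' then ((κ : ℝ) : ℂ) else (((1 - κ) / ((d : ℝ) - 1) : ℝ) : ℂ))
    (ρ : Matrix (Fin d) (Fin d) ℂ) (hρ : ρ.PosSemidef) (hρtr : ρ.trace = 1)
    (p : Fin (d + 1) → Fin d → ℝ)
    (hp : ∀ b n, ((p b n : ℝ) : ℂ) = (P b n * ρ).trace) :
    ∀ x : ℕ, 1 ≤ x → x ≤ d - 1 →
      ∑ b, (-∑ n, p b n * Real.logb 2 (p b n)) ≥
        ((d : ℝ) + 1) * (((x : ℝ) + 1) * Real.logb 2 ((x : ℝ) + 1) - (x : ℝ) * Real.logb 2 (x : ℝ)) -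
          (∑ b, ∑ n, (p b n) ^ 2) * (x : ℝ) * ((x : ℝ) + 1) *
            (Real.logb 2 ((x : ℝ) + 1) - Real.logb 2 (x : ℝ)) :=
  stmt4_general d P hpsd hsum ρ hρ hρtr p hp
end

section
/- Let d ≥ 2, let {𝒫^(b)}_{b=1}^{d+1} be a set of d+1 mutually unbiased measurements on ℂ^d with efficiency parameter κ, and let ρ be a density operator on ℂ^d. Then (1/(d+1)) Σ_{b=1}^{d+1} R_∞(𝒫^(b)|ρ) ≥ −ln g_d((κ+1)/(d+1)), where g_d(x) = (1 + √(d−1)·√(dx−1))/d. -/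
open Matrix Finset Real
open scoped ComplexOrder

private lemma trace_ct' {n : ℕ} (A : Matrix (Fin n) (Fin n) ℂ) :
    (Aᴴ * A).trace = ((∑ j, ∑ i, Complex.normSq (A i j) : ℝ) : ℂ) := by
  simp [Matrix.trace, Matrix.diag, Matrix.mul_apply, Complex.normSq_eq_conj_mul_self]

private lemma trace_sq_le_one {n : ℕ} (ρ : Matrix (Fin n) (Fin n) ℂ) (hρ : ρ.PosSemidef)
    (hρtr : ρ.trace = 1) : ∃ r : ℝ, (ρ * ρ).trace = (r : ℂ) ∧ r ≤ 1 := by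
  classical
  have hH := hρ.isHermitian
  refine ⟨∑ i, hH.eigenvalues i ^ 2, ?_, ?_⟩
  · have hspec := hH.spectral_theorem
    set U := (hH.eigenvectorUnitary : Matrix (Fin n) (Fin n) ℂ)
    set D := Matrix.diagonal ((RCLike.ofReal ∘ hH.eigenvalues : Fin n → ℂ)) with hD
    have hUU : star U * U = 1 := (Matrix.mem_unitaryGroup_iff').mp hH.eigenvectorUnitary.2
    have key : star U * (U * (D * star U)) = D * star U := by
      rw [← Matrix.mul_assoc, hUU, Matrix.one_mul]
    have hsq : ρ * ρ = U * (D * (D * star U)) := by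
      conv_lhs => rw [hspec]
      simp only [Unitary.conjStarAlgAut_apply, Matrix.mul_assoc, key]
      exact congrArg (fun X => U * (D * X)) key
    rw [hsq, Matrix.trace_mul_comm]
    simp only [Matrix.mul_assoc]
    rw [hUU, Matrix.mul_one]
    simp [hD, Matrix.diagonal_mul_diagonal, Matrix.trace_diagonal]
    push_cast
    exact Finset.sum_congr rfl fun i _ => (pow_two _).symm
  · have h1 : ∑ i, hH.eigenvalues i = 1 := by
      have htr : ρ.trace = ∑ i, (hH.eigenvalues i : ℂ) := by
        conv_lhs => rw [hH.spectral_theorem]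
        rw [Unitary.conjStarAlgAut_apply, Matrix.trace_mul_comm, ← Matrix.mul_assoc,
          (Matrix.mem_unitaryGroup_iff').mp hH.eigenvectorUnitary.2, Matrix.one_mul]
        simp [Matrix.trace_diagonal]
      rw [hρtr] at htr
      exact_mod_cast htr.symm
    have hnn : ∀ i, 0 ≤ hH.eigenvalues i := fun i => hρ.eigenvalues_nonneg i
    calc ∑ i, hH.eigenvalues i ^ 2 ≤ (∑ i, hH.eigenvalues i)^2 :=
          Finset.sum_sq_le_sq_sum_of_nonneg (fun i _ => hnn i)
      _ = 1 := by rw [h1]; norm_num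

private lemma band_bound' (d : ℕ) (hd : 2 ≤ d) (q : Fin d → ℝ)
    (h1 : ∑ n, q n = 1) (m I : ℝ) (hm : m = ⨆ n, q n) (hI : I = ∑ n, (q n)^2) :
    1/(d:ℝ) ≤ m ∧ 1 ≤ (d:ℝ) * I ∧
      (d:ℝ) * m - 1 ≤ Real.sqrt ((d:ℝ) - 1) * Real.sqrt ((d:ℝ) * I - 1) := by
  have hdpos : (0:ℝ) < d := by positivity
  have hd1 : (1:ℝ) ≤ (d:ℝ) - 1 := by
    have : (2:ℝ) ≤ d := by exact_mod_cast hd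
    linarith
  haveI : Nonempty (Fin d) := Fin.pos_iff_nonempty.mp (by omega)
  have hle : ∀ n, q n ≤ m := fun n => hm ▸ le_ciSup (Set.Finite.bddAbove (Set.finite_range q)) n
  obtain ⟨n0, hn0⟩ : ∃ n0, m = q n0 := by
    obtain ⟨n0, hn0⟩ := Finset.exists_max_image Finset.univ q ⟨⟨0, by omega⟩, Finset.mem_univ _⟩
    exact ⟨n0, le_antisymm (hm ▸ ciSup_le fun n => hn0.2 n (Finset.mem_univ n)) (hle n0)⟩
  have hI1 : 1 ≤ (d:ℝ) * I := by
    have h := sq_sum_le_card_mul_sum_sq (s := (Finset.univ : Finset (Fin d))) (f := q)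
    rw [h1] at h
    rw [hI]; simpa using h
  have hm1 : 1/(d:ℝ) ≤ m := by
    have : (1:ℝ) ≤ d * m := by
      calc (1:ℝ) = ∑ n, q n := h1.symm
        _ ≤ ∑ _n : Fin d, m := Finset.sum_le_sum (fun n _ => hle n)
        _ = d * m := by simp [mul_comm]
    rw [div_le_iff₀ hdpos]; linarith [this]
  refine ⟨hm1, hI1, ?_⟩
  have hkey : ((d:ℝ) * m - 1)^2 ≤ ((d:ℝ) - 1) * ((d:ℝ) * I - 1) := by
    have hrest : (1 - m)^2 ≤ ((d:ℝ) - 1) * ∑ n ∈ Finset.univ.erase n0, (q n)^2 := by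
      have hsum : ∑ n ∈ Finset.univ.erase n0, q n = 1 - m := by
        rw [hn0]; rw [← Finset.sum_erase_add Finset.univ q (Finset.mem_univ n0)] at h1; linarith
      have h := sq_sum_le_card_mul_sum_sq (s := Finset.univ.erase n0) (f := q)
      rw [hsum] at h
      have hcard : ((Finset.univ.erase n0).card : ℝ) = (d:ℝ) - 1 := by
        rw [Finset.card_erase_of_mem (Finset.mem_univ n0)]
        simp; rw [Nat.cast_sub (by omega)]; simp
      calc (1-m)^2 ≤ ((Finset.univ.erase n0).card : ℝ) * ∑ n ∈ Finset.univ.erase n0, (q n)^2 := h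
        _ = ((d:ℝ)-1) * ∑ n ∈ Finset.univ.erase n0, (q n)^2 := by rw [hcard]
    have hIsplit : I = (q n0)^2 + ∑ n ∈ Finset.univ.erase n0, (q n)^2 := by
      rw [hI, ← Finset.add_sum_erase Finset.univ (fun n => (q n)^2) (Finset.mem_univ n0)]
    have hI2 : I = m^2 + ∑ n ∈ Finset.univ.erase n0, (q n)^2 := by rw [hIsplit, hn0]
    rw [hI2]
    nlinarith [hrest, mul_le_mul_of_nonneg_left hrest (le_of_lt hdpos)]
  have h2 : ((d:ℝ)-1)*((d:ℝ)*I-1) = (Real.sqrt ((d:ℝ)-1) * Real.sqrt ((d:ℝ)*I-1))^2 := by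
    rw [mul_pow, Real.sq_sqrt (by linarith), Real.sq_sqrt (by linarith)]
  calc (d:ℝ)*m - 1 ≤ |(d:ℝ)*m-1| := le_abs_self _
    _ = Real.sqrt (((d:ℝ)*m-1)^2) := (Real.sqrt_sq_eq_abs _).symm
    _ ≤ Real.sqrt (((d:ℝ)-1)*((d:ℝ)*I-1)) := Real.sqrt_le_sqrt hkey
    _ = _ := by rw [h2, Real.sqrt_sq (by positivity)]

private lemma log_chain' (N : ℕ) (hN : 0 < N) (m : Fin N → ℝ) (G : ℝ)
    (hm : ∀ b, 0 < m b) (hMG : (∑ b, m b) / N ≤ G) :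
    (1 / (N : ℝ)) * (∑ b, (-Real.log (m b))) ≥ -Real.log G := by
  have hNpos : (0:ℝ) < N := by exact_mod_cast hN
  have hjen : ∑ b : Fin N, (1 / (N:ℝ)) • Real.log (m b) ≤
      Real.log (∑ b : Fin N, (1 / (N:ℝ)) • m b) := by
    refine (strictConcaveOn_log_Ioi.concaveOn).le_map_sum (fun i _ => by positivity) ?_
      (fun i _ => hm i)
    simp [Finset.card_fin]
    field_simp
  have havg : (∑ b : Fin N, (1 / (N:ℝ)) • m b) = (∑ b, m b) / N := by
    simp only [smul_eq_mul, ← Finset.mul_sum]; ring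
  rw [havg] at hjen
  have hsumpos : 0 < (∑ b, m b) / N := by
    have : 0 < ∑ b, m b := Finset.sum_pos (fun i _ => hm i)
      (by simpa using Finset.univ_nonempty_iff.mpr (Fin.pos_iff_nonempty.mp hN))
    positivity
  have hlogle : Real.log ((∑ b, m b) / N) ≤ Real.log G := Real.log_le_log hsumpos hMG
  have hfin : ∑ b : Fin N, (1 / (N:ℝ)) • Real.log (m b) ≤ Real.log G := hjen.trans hlogle
  have heq : (1 / (N : ℝ)) * (∑ b, (-Real.log (m b))) =
      -(∑ b : Fin N, (1 / (N:ℝ)) • Real.log (m b)) := by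
    simp only [smul_eq_mul, ← Finset.mul_sum, Finset.sum_neg_distrib]; ring
  rw [heq, ge_iff_le, neg_le_neg_iff]
  exact hfin

private lemma core' (d : ℕ) (hd : 2 ≤ d) (κ : ℝ)
    (hκ1 : 1 / (d : ℝ) < κ)
    (P : Fin (d + 1) → Fin d → Matrix (Fin d) (Fin d) ℂ)
    (hpsd : ∀ b n, (P b n).PosSemidef)
    (hsum : ∀ b, ∑ n, P b n = 1)
    (htr1 : ∀ b n, (P b n).trace = 1)
    (htr2 : ∀ b b', b ≠ b' → ∀ n n', (P b n * P b' n').trace = ((1 / (d : ℝ) : ℝ) : ℂ))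
    (htr3 : ∀ b n n', (P b n * P b n').trace =
      if n = n' then ((κ : ℝ) : ℂ) else (((1 - κ) / ((d : ℝ) - 1) : ℝ) : ℂ))
    (ρ : Matrix (Fin d) (Fin d) ℂ) (hρ : ρ.PosSemidef) (hρtr : ρ.trace = 1)
    (p : Fin (d + 1) → Fin d → ℝ)
    (hp : ∀ b n, ((p b n : ℝ) : ℂ) = (P b n * ρ).trace) :
    ∑ b, ∑ n, (p b n - 1/(d:ℝ))^2 ≤ κ - 1/(d:ℝ) := by
  classical
  have hdpos : (0:ℝ) < d := by positivity
  have hd1 : (1:ℝ) ≤ (d:ℝ) - 1 := by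
    have : (2:ℝ) ≤ d := by exact_mod_cast hd
    linarith
  set c : Fin (d+1) → Fin d → ℝ := fun b n => p b n - 1/(d:ℝ) with hc
  set l : ℝ := κ - (1-κ)/((d:ℝ)-1) with hl
  have hκd : 1 < (d:ℝ) * κ := by
    rw [div_lt_iff₀ hdpos] at hκ1; linarith
  have hlpos : 0 < l := by
    rw [hl]
    have h2 : (1-κ)/((d:ℝ)-1) < κ := by
      rw [div_lt_iff₀ (by linarith : (0:ℝ) < (d:ℝ)-1)]
      nlinarith
    linarith
  have hp1 : ∀ b, ∑ n, p b n = 1 := by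
    intro b
    have h : ((∑ n, p b n : ℝ) : ℂ) = ((1:ℝ):ℂ) := by
      push_cast
      rw [Finset.sum_congr rfl (fun n _ => hp b n), ← Matrix.trace_sum, ← Matrix.sum_mul,
        hsum, Matrix.one_mul, hρtr]
    exact_mod_cast h
  have hcR0 : ∀ b, ∑ n, c b n = 0 := by
    intro b
    simp only [hc]
    rw [Finset.sum_sub_distrib, hp1 b, Finset.sum_const, Finset.card_fin]
    field_simp
    rw [nsmul_eq_mul, mul_one_div_cancel hdpos.ne', sub_self]
  have hc0 : ∀ b, ∑ n, ((c b n : ℝ) : ℂ) = 0 := by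
    intro b
    rw [← Complex.ofReal_sum, hcR0 b, Complex.ofReal_zero]
  set C : ℝ := ∑ b, ∑ n, (c b n)^2 with hC
  set S : Matrix (Fin d) (Fin d) ℂ := ∑ b, ∑ n, ((c b n : ℝ) : ℂ) • P b n with hS
  set σ : Matrix (Fin d) (Fin d) ℂ := ρ - ((1/(d:ℝ) : ℝ) : ℂ) • 1 with hσ
  have hSX : ∀ X : Matrix (Fin d) (Fin d) ℂ, (S * X).trace
      = ∑ b, ∑ n, ((c b n : ℝ) : ℂ) * (P b n * X).trace := by
    intro X
    rw [hS]
    simp [Matrix.sum_mul, Matrix.smul_mul, Matrix.trace_sum, Matrix.trace_smul, smul_eq_mul]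
  -- (S*S).trace
  have hSS : (S * S).trace = ((l * C : ℝ) : ℂ) := by
    rw [hSX S]
    have hinner : ∀ b n, (P b n * S).trace = ((c b n : ℝ):ℂ) * ((l:ℝ):ℂ) := by
      intro b n
      rw [hS]
      simp only [Matrix.mul_sum, Matrix.mul_smul, Matrix.trace_sum, Matrix.trace_smul,
        smul_eq_mul]
      rw [← Finset.add_sum_erase Finset.univ _ (Finset.mem_univ b)]
      have hoff : ∑ b' ∈ Finset.univ.erase b, ∑ n', ((c b' n' : ℝ):ℂ) * (P b n * P b' n').trace
          = 0 := by
        apply Finset.sum_eq_zero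
        intro b' hb'
        have hne : b ≠ b' := fun h => (Finset.mem_erase.mp hb').1 h.symm
        calc ∑ n', ((c b' n' : ℝ):ℂ) * (P b n * P b' n').trace
            = ∑ n', ((c b' n' : ℝ):ℂ) * ((1/(d:ℝ):ℝ):ℂ) :=
              Finset.sum_congr rfl fun n' _ => by rw [htr2 b b' hne n n']
          _ = (∑ n', ((c b' n' : ℝ):ℂ)) * ((1/(d:ℝ):ℝ):ℂ) := by rw [← Finset.sum_mul]
          _ = 0 := by rw [hc0 b']; ring
      rw [hoff, add_zero]
      calc ∑ n', ((c b n' : ℝ):ℂ) * (P b n * P b n').trace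
          = ∑ n', (((c b n' : ℝ):ℂ) * (((1-κ)/((d:ℝ)-1) : ℝ):ℂ) +
              if n' = n then ((c b n' : ℝ):ℂ) * (((κ:ℝ):ℂ) - (((1-κ)/((d:ℝ)-1) : ℝ):ℂ)) else 0) := by
            refine Finset.sum_congr rfl fun n' _ => ?_
            rw [htr3 b n n']
            by_cases h : n = n'
            · subst h; simp only [eq_self_iff_true, if_true]; ring
            · have h' : ¬ (n' = n) := fun hh => h hh.symm
              simp [h, h']
        _ = (∑ n', ((c b n' : ℝ):ℂ)) * (((1-κ)/((d:ℝ)-1) : ℝ):ℂ) +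
              ((c b n : ℝ):ℂ) * (((κ:ℝ):ℂ) - (((1-κ)/((d:ℝ)-1) : ℝ):ℂ)) := by
            rw [Finset.sum_add_distrib, ← Finset.sum_mul,
              Finset.sum_ite_eq' Finset.univ n
                (fun n' => ((c b n' : ℝ):ℂ) * (((κ:ℝ):ℂ) - (((1-κ)/((d:ℝ)-1) : ℝ):ℂ)))]
            simp
        _ = ((c b n : ℝ):ℂ) * ((l:ℝ):ℂ) := by
            rw [hc0 b, hl]
            push_cast
            ring
    rw [Finset.sum_congr rfl (fun b _ => Finset.sum_congr rfl (fun n _ => by rw [hinner b n]))]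
    rw [hC]
    push_cast
    rw [Finset.mul_sum]
    refine Finset.sum_congr rfl fun b _ => ?_
    rw [Finset.mul_sum]
    exact Finset.sum_congr rfl fun n _ => by ring
  -- (S*σ).trace
  have hSσ : (S * σ).trace = ((C : ℝ) : ℂ) := by
    rw [hSX σ]
    have hPσ : ∀ b n, (P b n * σ).trace = ((c b n : ℝ):ℂ) := by
      intro b n
      rw [hσ, Matrix.mul_sub, Matrix.mul_smul, Matrix.mul_one, Matrix.trace_sub,
        Matrix.trace_smul, ← hp b n, htr1 b n, smul_eq_mul, mul_one]
      simp only [hc]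
      push_cast
      ring
    rw [Finset.sum_congr rfl (fun b _ => Finset.sum_congr rfl (fun n _ => by rw [hPσ b n]))]
    rw [hC]
    push_cast
    refine Finset.sum_congr rfl fun b _ => Finset.sum_congr rfl fun n _ => by ring
  -- (σ*σ).trace
  obtain ⟨r, hr, hrle⟩ := trace_sq_le_one ρ hρ hρtr
  have hσσ : (σ * σ).trace = ((r - 1/(d:ℝ) : ℝ) : ℂ) := by
    rw [hσ]
    simp only [Matrix.sub_mul, Matrix.mul_sub, Matrix.smul_mul, Matrix.mul_smul,
      Matrix.one_mul, Matrix.mul_one, Matrix.trace_sub, Matrix.trace_smul, smul_smul,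
      smul_eq_mul, Matrix.trace_one, hr, hρtr, Fintype.card_fin]
    have hdne : ((d:ℝ):ℂ) ≠ 0 := by
      simp only [ne_eq, Complex.ofReal_eq_zero]; positivity
    push_cast
    field_simp
    ring
  -- Hermitian facts
  have hSH : Sᴴ = S := by
    rw [hS]
    rw [Matrix.conjTranspose_sum]
    refine Finset.sum_congr rfl fun b _ => ?_
    rw [Matrix.conjTranspose_sum]
    refine Finset.sum_congr rfl fun n _ => ?_
    rw [Matrix.conjTranspose_smul, (hpsd b n).1.eq, Complex.star_def, Complex.conj_ofReal]
  have hσH : σᴴ = σ := by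
    rw [hσ, Matrix.conjTranspose_sub, Matrix.conjTranspose_smul, Matrix.conjTranspose_one,
      hρ.1.eq, Complex.star_def, Complex.conj_ofReal]
  set M : Matrix (Fin d) (Fin d) ℂ := S - ((l:ℝ):ℂ) • σ with hM
  have hMH : Mᴴ = M := by
    rw [hM, Matrix.conjTranspose_sub, Matrix.conjTranspose_smul, hSH, hσH,
      Complex.star_def, Complex.conj_ofReal]
  -- expand trace of M*M
  have hexp : (M * M).trace = ((l^2*(r - 1/(d:ℝ)) - l*C : ℝ) : ℂ) := by
    rw [hM]
    simp only [Matrix.sub_mul, Matrix.mul_sub, Matrix.smul_mul, Matrix.mul_smul,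
      Matrix.trace_sub, Matrix.trace_smul, smul_smul, smul_eq_mul]
    rw [hSS, hSσ, Matrix.trace_mul_comm σ S, hSσ, hσσ]
    push_cast
    ring
  -- nonnegativity
  have hnn : 0 ≤ l^2*(r - 1/(d:ℝ)) - l*C := by
    have h1 : (M * M).trace = (Mᴴ * M).trace := by rw [hMH]
    rw [trace_ct' M] at h1
    have h2 : l^2*(r - 1/(d:ℝ)) - l*C = ∑ j, ∑ i, Complex.normSq (M i j) := by
      have := hexp.symm.trans h1
      exact_mod_cast this
    rw [h2]
    exact Finset.sum_nonneg fun j _ => Finset.sum_nonneg fun i _ => Complex.normSq_nonneg _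
  -- conclude
  have hCle : C ≤ l * (r - 1/(d:ℝ)) := by
    have h3 : l * C ≤ l * (l * (r - 1/(d:ℝ))) := by nlinarith [hnn]
    exact (mul_le_mul_iff_right₀ hlpos).mp h3
  have hle2 : l * (r - 1/(d:ℝ)) ≤ l * (1 - 1/(d:ℝ)) :=
    mul_le_mul_of_nonneg_left (by linarith) hlpos.le
  have hfin : l * (1 - 1/(d:ℝ)) = κ - 1/(d:ℝ) := by
    rw [hl]
    field_simp
    ring
  show C ≤ κ - 1/(d:ℝ)
  linarith

theorem stmt12 (d : ℕ) (hd : 2 ≤ d) (κ : ℝ)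
    (hκ1 : 1 / (d : ℝ) < κ) (hκ2 : κ ≤ 1)
    (P : Fin (d + 1) → Fin d → Matrix (Fin d) (Fin d) ℂ)
    (hpsd : ∀ b n, (P b n).PosSemidef)
    (hsum : ∀ b, ∑ n, P b n = 1)
    (htr1 : ∀ b n, (P b n).trace = 1)
    (htr2 : ∀ b b', b ≠ b' → ∀ n n', (P b n * P b' n').trace = ((1 / (d : ℝ) : ℝ) : ℂ))
    (htr3 : ∀ b n n', (P b n * P b n').trace =
      if n = n' then ((κ : ℝ) : ℂ) else (((1 - κ) / ((d : ℝ) - 1) : ℝ) : ℂ))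
    (ρ : Matrix (Fin d) (Fin d) ℂ) (hρ : ρ.PosSemidef) (hρtr : ρ.trace = 1)
    (p : Fin (d + 1) → Fin d → ℝ)
    (hp : ∀ b n, ((p b n : ℝ) : ℂ) = (P b n * ρ).trace) :
    (1 / ((d : ℝ) + 1)) * (∑ b, (-Real.log (⨆ n, p b n))) ≥
      -Real.log ((1 + Real.sqrt ((d : ℝ) - 1) * Real.sqrt ((d : ℝ) * ((κ + 1) / ((d : ℝ) + 1)) - 1)) / (d : ℝ)) := by
  classical
  have hdpos : (0:ℝ) < d := by positivity
  have hd1 : (1:ℝ) ≤ (d:ℝ) - 1 := by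
    have : (2:ℝ) ≤ d := by exact_mod_cast hd
    linarith
  have hκd : 1 < (d:ℝ) * κ := by
    rw [div_lt_iff₀ hdpos] at hκ1; linarith
  -- sums of p
  have hp1 : ∀ b, ∑ n, p b n = 1 := by
    intro b
    have h : ((∑ n, p b n : ℝ) : ℂ) = ((1:ℝ):ℂ) := by
      push_cast
      rw [Finset.sum_congr rfl (fun n _ => hp b n), ← Matrix.trace_sum, ← Matrix.sum_mul,
        hsum, Matrix.one_mul, hρtr]
    exact_mod_cast h
  have hcore := core' d hd κ hκ1 P hpsd hsum htr1 htr2 htr3 ρ hρ hρtr p hp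
  -- per-band quantities
  set m : Fin (d+1) → ℝ := fun b => ⨆ n, p b n with hmdef
  set I : Fin (d+1) → ℝ := fun b => ∑ n, (p b n)^2 with hIdef
  have hband := fun b => band_bound' d hd (p b) (hp1 b) (m b) (I b) rfl rfl
  -- I b in terms of centered squares
  have hIsq : ∀ b, I b = (∑ n, (p b n - 1/(d:ℝ))^2) + 1/(d:ℝ) := by
    intro b
    have h : ∀ n, (p b n)^2 = (p b n - 1/(d:ℝ))^2 + (2/(d:ℝ))*(p b n) - 1/(d:ℝ)^2 := by
      intro n; field_simp; ring
    simp only [hIdef]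
    calc ∑ n, (p b n)^2
        = ∑ n, ((p b n - 1/(d:ℝ))^2 + (2/(d:ℝ))*(p b n) - 1/(d:ℝ)^2) :=
          Finset.sum_congr rfl fun n _ => h n
      _ = (∑ n, (p b n - 1/(d:ℝ))^2) + (2/(d:ℝ))*(∑ n, p b n) - (d:ℝ)*(1/(d:ℝ)^2) := by
          rw [Finset.sum_sub_distrib, Finset.sum_add_distrib, ← Finset.mul_sum,
            Finset.sum_const, Finset.card_fin, nsmul_eq_mul]
      _ = (∑ n, (p b n - 1/(d:ℝ))^2) + 1/(d:ℝ) := by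
          rw [hp1 b]
          have hdne : (d:ℝ) ≠ 0 := by positivity
          generalize (∑ n, (p b n - 1/(d:ℝ))^2) = X
          field_simp
          ring
  -- total bound on ∑ (d * I b - 1)
  have htot : ∑ b, ((d:ℝ) * I b - 1) ≤ (d:ℝ)*κ - 1 := by
    have : ∑ b, ((d:ℝ) * I b - 1) = (d:ℝ) * ∑ b, ∑ n, (p b n - 1/(d:ℝ))^2 := by
      rw [Finset.sum_sub_distrib, ← Finset.mul_sum]
      rw [Finset.sum_congr rfl (fun b _ => hIsq b)]
      rw [Finset.sum_add_distrib, Finset.sum_const, Finset.card_fin]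
      generalize (∑ b, ∑ n, (p b n - 1/(d:ℝ))^2) = X
      simp only [Finset.sum_const, Finset.card_univ, Fintype.card_fin, Finset.card_fin, nsmul_eq_mul, mul_one]
      push_cast
      field_simp
      ring
    rw [this]
    calc (d:ℝ) * ∑ b, ∑ n, (p b n - 1/(d:ℝ))^2 ≤ (d:ℝ) * (κ - 1/(d:ℝ)) :=
          mul_le_mul_of_nonneg_left hcore hdpos.le
      _ = (d:ℝ)*κ - 1 := by field_simp
  -- s b := sqrt (d * I b - 1)
  set s : Fin (d+1) → ℝ := fun b => Real.sqrt ((d:ℝ) * I b - 1) with hsdef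
  have hs_sq : ∀ b, (s b)^2 = (d:ℝ) * I b - 1 := by
    intro b
    exact Real.sq_sqrt (by linarith [(hband b).2.1])
  have hssum : ∑ b, s b ≤ Real.sqrt (((d:ℝ)+1) * ((d:ℝ)*κ - 1)) := by
    have h1 : (∑ b, s b)^2 ≤ ((d:ℝ)+1) * ∑ b, (s b)^2 := by
      have := sq_sum_le_card_mul_sum_sq (s := (Finset.univ : Finset (Fin (d+1)))) (f := s)
      calc (∑ b, s b)^2 ≤ ((Finset.univ : Finset (Fin (d+1))).card : ℝ) * ∑ b, (s b)^2 := this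
        _ = ((d:ℝ)+1) * ∑ b, (s b)^2 := by rw [Finset.card_fin]; push_cast; ring
    have h2 : ∑ b, (s b)^2 ≤ (d:ℝ)*κ - 1 := by
      rw [Finset.sum_congr rfl (fun b _ => hs_sq b)]
      exact htot
    have h3 : (∑ b, s b)^2 ≤ ((d:ℝ)+1) * ((d:ℝ)*κ - 1) := by
      calc (∑ b, s b)^2 ≤ ((d:ℝ)+1) * ∑ b, (s b)^2 := h1
        _ ≤ ((d:ℝ)+1) * ((d:ℝ)*κ - 1) := mul_le_mul_of_nonneg_left h2 (by positivity)
    calc ∑ b, s b ≤ |∑ b, s b| := le_abs_self _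
      _ = Real.sqrt ((∑ b, s b)^2) := (Real.sqrt_sq_eq_abs _).symm
      _ ≤ _ := Real.sqrt_le_sqrt h3
  -- average of m
  have hmsum : ∑ b, m b ≤ (((d:ℝ)+1) + Real.sqrt ((d:ℝ)-1) * ∑ b, s b) / d := by
    have hb : ∀ b, m b ≤ (1 + Real.sqrt ((d:ℝ)-1) * s b) / d := by
      intro b
      rw [le_div_iff₀ hdpos, mul_comm]
      have h := (hband b).2.2
      simp only [hsdef]
      linarith [h]
    calc ∑ b, m b ≤ ∑ b, (1 + Real.sqrt ((d:ℝ)-1) * s b) / d :=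
          Finset.sum_le_sum (fun b _ => hb b)
      _ = (((d:ℝ)+1) + Real.sqrt ((d:ℝ)-1) * ∑ b, s b) / d := by
          rw [← Finset.sum_div]
          congr 1
          rw [Finset.sum_add_distrib, Finset.sum_const, Finset.card_fin, ← Finset.mul_sum]
          push_cast
          ring
  -- the target bound G
  set G : ℝ := (1 + Real.sqrt ((d : ℝ) - 1) * Real.sqrt ((d : ℝ) * ((κ + 1) / ((d : ℝ) + 1)) - 1)) / (d : ℝ) with hGdef
  have hGarg : (d : ℝ) * ((κ + 1) / ((d : ℝ) + 1)) - 1 = ((d:ℝ)*κ - 1)/((d:ℝ)+1) := by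
    field_simp
    ring
  have hsqrt_eq : Real.sqrt (((d:ℝ)+1) * ((d:ℝ)*κ - 1)) =
      ((d:ℝ)+1) * Real.sqrt (((d:ℝ)*κ - 1)/((d:ℝ)+1)) := by
    rw [show ((d:ℝ)+1) * ((d:ℝ)*κ - 1) = (((d:ℝ)*κ - 1)/((d:ℝ)+1)) * ((d:ℝ)+1)^2 by
      field_simp]
    rw [Real.sqrt_mul (div_nonneg (by linarith) (by positivity)) (((d:ℝ)+1)^2),
      Real.sqrt_sq (by positivity)]
    ring
  have hMG : (∑ b, m b) / ((d+1 : ℕ) : ℝ) ≤ G := by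
    have hcast : (((d+1) : ℕ) : ℝ) = (d:ℝ)+1 := by push_cast; ring
    have hsum' : ∑ b, m b ≤ ((d:ℝ)+1) * G := by
      have hA : (0:ℝ) ≤ Real.sqrt ((d:ℝ)-1) := Real.sqrt_nonneg _
      calc ∑ b, m b ≤ (((d:ℝ)+1) + Real.sqrt ((d:ℝ)-1) * ∑ b, s b) / d := hmsum
        _ ≤ (((d:ℝ)+1) + Real.sqrt ((d:ℝ)-1) *
              (((d:ℝ)+1) * Real.sqrt (((d:ℝ)*κ-1)/((d:ℝ)+1)))) / d := by
            gcongr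
            rw [← hsqrt_eq]
            exact hssum
        _ = ((d:ℝ)+1) * G := by rw [hGdef, hGarg]; field_simp
    rw [hcast, div_le_iff₀ (by positivity : (0:ℝ) < (d:ℝ)+1)]
    nlinarith [hsum']
  have hmpos : ∀ b, 0 < m b := by
    intro b
    have := (hband b).1
    have h0 : (0:ℝ) < 1/(d:ℝ) := by positivity
    linarith
  have := log_chain' (d+1) (by omega) m G hmpos hMG
  simpa [hGdef] using this
end

section
/- Let d ≥ 2, let {𝒫^(b)}_{b=1}^{d+1} be a set of d+1 mutually unbiased measurements on ℂ^d with efficiency parameter κ, and let ρ be a density operator on ℂ^d. Then (1/(d+1)) Σ_{b=1}^{d+1} (max_{1≤n≤d} p_n^(b)) ≤ g_d(C(κ,ρ)/(d+1)), where g_d(x) = (1 + √(d−1)·√(dx−1))/d and C(κ,ρ) = Σ_{b=1}^{d+1} Σ_{n=1}^{d} (p_n^(b))². -/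
/-!
Each row `p b` sums to `1`. For such a vector `f` on `d` outcomes, Cauchy–Schwarz applied to the
remaining `d - 1` entries, which sum to `1 - f i`, gives `(d f i - 1)² ≤ (d - 1)(d ∑ f² - 1)`,
i.e. `max f ≤ g_d(∑ f²)`. Averaging over the `d + 1` measurements, concavity of `√` (Jensen)
moves the average inside `g_d`.
-/

open Matrix Finset Real
open scoped ComplexOrder

/-- The function `g_n` of the bound. -/
noncomputable def maxProbBound (n x : ℝ) : ℝ := (1 + √(n - 1) * √(n * x - 1)) / n

section ProbabilityVector

variable {ι : Type*} [Fintype ι] {f : ι → ℝ}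

theorem nonempty_of_sum_eq_one (hf : ∑ i, f i = 1) : Nonempty ι := by
  obtain ⟨i, -, -⟩ := Finset.exists_ne_zero_of_sum_ne_zero (hf ▸ one_ne_zero : ∑ i, f i ≠ 0)
  exact ⟨i⟩

theorem one_le_card_mul_sum_sq (hf : ∑ i, f i = 1) : 1 ≤ (Fintype.card ι : ℝ) * ∑ i, f i ^ 2 := by
  simpa [hf] using sq_sum_le_card_mul_sum_sq (s := univ) (f := f)

theorem card_mul_sub_one_sq_le [DecidableEq ι] (hf : ∑ i, f i = 1) (i : ι) :
    ((Fintype.card ι : ℝ) * f i - 1) ^ 2 ≤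
      ((Fintype.card ι : ℝ) - 1) * ((Fintype.card ι : ℝ) * ∑ j, f j ^ 2 - 1) := by
  have hrest : ∑ j ∈ univ.erase i, f j = 1 - f i := by
    rw [Finset.sum_erase_eq_sub (mem_univ i), hf]
  have hcs := sq_sum_le_card_mul_sum_sq (s := univ.erase i) (f := f)
  rw [hrest, Finset.cast_card_erase_of_mem (mem_univ i), Finset.sum_erase_eq_sub (mem_univ i),
    card_univ] at hcs
  nlinarith [hcs]

theorem le_maxProbBound (hf : ∑ i, f i = 1) (i : ι) :
    f i ≤ maxProbBound (Fintype.card ι) (∑ j, f j ^ 2) := by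
  classical
  have : Nonempty ι := nonempty_of_sum_eq_one hf
  have hn : (1 : ℝ) ≤ Fintype.card ι := Nat.one_le_cast.2 Fintype.card_pos
  have hsq := card_mul_sub_one_sq_le hf i
  rw [maxProbBound, le_div_iff₀ (by linarith), ← Real.sqrt_mul (by linarith)]
  nlinarith [Real.le_sqrt_of_sq_le hsq]

theorem iSup_le_maxProbBound (hf : ∑ i, f i = 1) :
    ⨆ i, f i ≤ maxProbBound (Fintype.card ι) (∑ j, f j ^ 2) :=
  have : Nonempty ι := nonempty_of_sum_eq_one hf
  ciSup_le (le_maxProbBound hf)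

end ProbabilityVector

theorem sum_maxProbBound_le {β : Type*} [Fintype β] [Nonempty β] {n : ℝ} (hn : 0 ≤ n)
    (x : β → ℝ) (hx : ∀ b, 1 ≤ n * x b) :
    1 / (Fintype.card β : ℝ) * ∑ b, maxProbBound n (x b) ≤
      maxProbBound n ((∑ b, x b) / Fintype.card β) := by
  have hN : (0 : ℝ) < Fintype.card β := by exact_mod_cast Fintype.card_pos
  have hjensen : 1 / (Fintype.card β : ℝ) * ∑ b, √(n * x b - 1) ≤
      √(n * ((∑ b, x b) / Fintype.card β) - 1) := by
    have := Real.strictConcaveOn_sqrt.concaveOn.le_map_sum (t := univ)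
      (w := fun _ => 1 / (Fintype.card β : ℝ)) (p := fun b => n * x b - 1)
      (fun _ _ => by positivity) (by simp [hN.ne']) (fun b _ => sub_nonneg.2 (hx b))
    have hmean : 1 / (Fintype.card β : ℝ) * ∑ b, (n * x b - 1) =
        n * ((∑ b, x b) / Fintype.card β) - 1 := by
      rw [Finset.sum_sub_distrib, ← Finset.mul_sum, sum_const, card_univ, nsmul_one]
      field_simp
    simpa only [smul_eq_mul, ← Finset.mul_sum, hmean] using this
  calc 1 / (Fintype.card β : ℝ) * ∑ b, maxProbBound n (x b)
      = (1 + √(n - 1) * (1 / (Fintype.card β : ℝ) * ∑ b, √(n * x b - 1))) / n := by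
        simp only [maxProbBound, ← Finset.sum_div, Finset.sum_add_distrib, ← Finset.mul_sum,
          sum_const, card_univ, nsmul_one]
        field_simp
    _ ≤ maxProbBound n ((∑ b, x b) / Fintype.card β) := by
        unfold maxProbBound
        gcongr

theorem sum_eq_one_of_resolution_of_identity {ι m : Type*} [Fintype ι] [Fintype m] [DecidableEq m]
    (P : ι → Matrix m m ℂ) (ρ : Matrix m m ℂ) (p : ι → ℝ)
    (hsum : ∑ i, P i = 1) (hρ : ρ.trace = 1) (hp : ∀ i, (p i : ℂ) = (P i * ρ).trace) :
    ∑ i, p i = 1 := by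
  have : ((∑ i, p i : ℝ) : ℂ) = 1 := by
    rw [Complex.ofReal_sum]
    simp_rw [hp, ← Matrix.trace_sum, ← Finset.sum_mul, hsum, one_mul, hρ]
  exact_mod_cast this

theorem stmt13_general (d : ℕ)
    (P : Fin (d + 1) → Fin d → Matrix (Fin d) (Fin d) ℂ)
    (hsum : ∀ b, ∑ n, P b n = 1)
    (ρ : Matrix (Fin d) (Fin d) ℂ) (hρtr : ρ.trace = 1)
    (p : Fin (d + 1) → Fin d → ℝ)
    (hp : ∀ b n, ((p b n : ℝ) : ℂ) = (P b n * ρ).trace) :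
    (1 / ((d : ℝ) + 1)) * (∑ b, ⨆ n, p b n) ≤
      ((1 + Real.sqrt ((d : ℝ) - 1) * Real.sqrt ((d : ℝ) * ((∑ b, ∑ n, (p b n) ^ 2) / ((d : ℝ) + 1)) - 1)) / (d : ℝ)) := by
  have hprob : ∀ b, ∑ n, p b n = 1 := fun b =>
    sum_eq_one_of_resolution_of_identity (P b) ρ (p b) (hsum b) hρtr (hp b)
  have hjensen := sum_maxProbBound_le (Nat.cast_nonneg d) (fun b => ∑ n, p b n ^ 2)
    fun b => by simpa using one_le_card_mul_sum_sq (hprob b)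
  simp only [Fintype.card_fin, Nat.cast_add, Nat.cast_one] at hjensen
  calc (1 / ((d : ℝ) + 1)) * (∑ b, ⨆ n, p b n)
      ≤ 1 / ((d : ℝ) + 1) * ∑ b, maxProbBound d (∑ n, p b n ^ 2) := by
        gcongr with b
        simpa using iSup_le_maxProbBound (hprob b)
    _ ≤ _ := hjensen

theorem stmt13 (d : ℕ) (hd : 2 ≤ d) (κ : ℝ)
    (hκ1 : 1 / (d : ℝ) < κ) (hκ2 : κ ≤ 1)
    (P : Fin (d + 1) → Fin d → Matrix (Fin d) (Fin d) ℂ)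
    (hpsd : ∀ b n, (P b n).PosSemidef)
    (hsum : ∀ b, ∑ n, P b n = 1)
    (htr1 : ∀ b n, (P b n).trace = 1)
    (htr2 : ∀ b b', b ≠ b' → ∀ n n', (P b n * P b' n').trace = ((1 / (d : ℝ) : ℝ) : ℂ))
    (htr3 : ∀ b n n', (P b n * P b n').trace =
      if n = n' then ((κ : ℝ) : ℂ) else (((1 - κ) / ((d : ℝ) - 1) : ℝ) : ℂ))
    (ρ : Matrix (Fin d) (Fin d) ℂ) (hρ : ρ.PosSemidef) (hρtr : ρ.trace = 1)
    (p : Fin (d + 1) → Fin d → ℝ)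
    (hp : ∀ b n, ((p b n : ℝ) : ℂ) = (P b n * ρ).trace) :
    (1 / ((d : ℝ) + 1)) * (∑ b, ⨆ n, p b n) ≤
      ((1 + Real.sqrt ((d : ℝ) - 1) * Real.sqrt ((d : ℝ) * ((∑ b, ∑ n, (p b n) ^ 2) / ((d : ℝ) + 1)) - 1)) / (d : ℝ)) :=
  stmt13_general d P hsum ρ hρtr p hp
end
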